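/- arXiv:1706.04170 — 8 statements merged into one kernel-verified Lean document; each statement's English description precedes it below -/
import Mathlib

section
/- For coprime positive integers p and q, as α → ∞, N_{p/q}(α) = α²/2 − ((√(p/q) + √(q/p) − √(1/(pq))·(1 − 2{α√(pq)}))/2)·α + O_{p,q}(1), where {x} denotes the fractional part of x. -/
/-- `N β α` is the number of positive lattice points `(k,m)` with `m ≤ α√β − kβ`. -/
noncomputable def N (β α : ℝ) : ℕ :=
  Set.ncard {p : ℤ × ℤ | 0 < p.1 ∧ 0 < p.2 ∧
    (p.2 : ℝ) ≤ α * Real.sqrt β - (p.1 : ℝ) * β}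

/-!
With `s = √(pq)` and `n = ⌊α s⌋ = α s - {α s}`, the lattice points are those with
`q m + p k ≤ n`, so `N = ∑_{0 < k ≤ n/p} ⌊(n - p k)/q⌋`. Writing `⌊x/q⌋ = (x - x % q)/q`, this is
`(n² - p n)/(2pq) - (1/q) ∑ (n - p k) % q` up to `O(1)`. Since `p` is invertible mod `q`, the
residues run through `0, …, q - 1` on every block of `q` consecutive `k`, so they average `(q - 1)/2`
up to `O(1)`. Hence `2pq N = n² - (p + q - 1) n + O(1)`, and substituting `n = α s - {α s}` gives
the expansion.
-/

open Finset

lemma two_mul_sum_Ioc_zero_id {K : ℤ} (hK : 0 ≤ K) : 2 * ∑ k ∈ Ioc 0 K, k = K * (K + 1) := by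
  induction K, hK using Int.leInduction with
  | base => simp
  | succ K hK ih =>
    rw [← insert_Ioc_right_eq_Ioc_add_one hK, sum_insert (by simp)]
    linear_combination ih

lemma two_mul_sum_Ico_zero_id {q : ℤ} (hq : 0 ≤ q) : 2 * ∑ r ∈ Ico 0 q, r = q * (q - 1) := by
  have h : ∑ r ∈ Ioc 0 q, r = q + ∑ r ∈ Ico 0 q, r := by
    rw [← add_zero (∑ r ∈ Ioc 0 q, r), sum_Ioc_add_eq_sum_Icc hq, ← Ico_insert_right hq,
      sum_insert (by simp)]
  linear_combination (two_mul_sum_Ioc_zero_id hq) - 2 * h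

lemma sum_Ioc_add_mul_eq_of_sum_Ioc {M : Type*} [AddCommMonoid M] {f : ℤ → M} {q : ℤ} {P : M}
    (hq : 0 ≤ q) (hP : ∀ a, ∑ k ∈ Ioc a (a + q), f k = P) (a : ℤ) (t : ℕ) :
    ∑ k ∈ Ioc a (a + t * q), f k = t • P := by
  induction t with
  | zero => simp
  | succ t ih =>
    have hle : a ≤ a + t * q := le_add_of_nonneg_right (mul_nonneg t.cast_nonneg hq)
    have hsplit : a + (t + 1 : ℕ) * q = a + t * q + q := by push_cast; ring
    rw [hsplit, ← Ioc_union_Ioc_eq_Ioc hle (by linarith), sum_union (Ioc_disjoint_Ioc_of_le le_rfl),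
      ih, hP, succ_nsmul]

lemma sum_Ioc_mem_Icc_of_mem_Icc {f : ℤ → ℤ} {B : ℤ} (hf : ∀ k, f k ∈ Set.Icc 0 B) {a b : ℤ}
    (hab : a ≤ b) : ∑ k ∈ Ioc a b, f k ∈ Set.Icc 0 ((b - a) * B) := by
  have hcard : ((#(Ioc a b) : ℕ) : ℤ) = b - a := by rw [Int.card_Ioc]; omega
  refine ⟨sum_nonneg fun k _ => (hf k).1, ?_⟩
  calc ∑ k ∈ Ioc a b, f k ≤ #(Ioc a b) • B := sum_le_card_nsmul _ _ _ fun k _ => (hf k).2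
    _ = (b - a) * B := by rw [nsmul_eq_mul, hcard]

lemma abs_mul_sum_Ioc_sub_le_of_sum_Ioc {f : ℤ → ℤ} {q B P : ℤ} (hq : 0 < q)
    (hf : ∀ k, f k ∈ Set.Icc 0 B) (hP : ∀ a, ∑ k ∈ Ioc a (a + q), f k = P) {K : ℤ} (hK : 0 ≤ K) :
    |q * ∑ k ∈ Ioc 0 K, f k - K * P| ≤ q * q * B := by
  obtain ⟨t, ht⟩ : ∃ t : ℕ, (t : ℤ) = K / q := ⟨(K / q).toNat, Int.toNat_of_nonneg (by positivity)⟩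
  set u := K % q
  have hKtu : K = t * q + u := by rw [ht]; linarith [Int.mul_ediv_add_emod K q]
  have hu : 0 ≤ u ∧ u < q := ⟨Int.emod_nonneg K hq.ne', Int.emod_lt_of_pos K hq⟩
  have htq : (0 : ℤ) ≤ t * q := by positivity
  have hsplit : ∑ k ∈ Ioc 0 K, f k = t * P + ∑ k ∈ Ioc (t * q) K, f k := by
    rw [← Ioc_union_Ioc_eq_Ioc htq (by omega), sum_union (Ioc_disjoint_Ioc_of_le le_rfl),
      ← zero_add ((t : ℤ) * q), sum_Ioc_add_mul_eq_of_sum_Ioc hq.le hP, nsmul_eq_mul, zero_add]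
  obtain ⟨hP0, hPB⟩ := hP 0 ▸ sum_Ioc_mem_Icc_of_mem_Icc hf (a := 0) (b := 0 + q) (by omega)
  obtain ⟨hr0, hrB⟩ := sum_Ioc_mem_Icc_of_mem_Icc hf (show t * q ≤ K by omega)
  rw [hsplit, abs_le]
  constructor <;> nlinarith

lemma injOn_sub_mul_emod {p q : ℤ} (hpq : IsCoprime p q) (n a : ℤ) :
    Set.InjOn (fun k => (n - p * k) % q) (Ioc a (a + q)) := by
  intro x hx y hy hxy
  simp only [coe_Ioc, Set.mem_Ioc] at hx hy
  have hdvd : q ∣ p * (x - y) := by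
    have := Int.ModEq.dvd hxy
    rwa [show n - p * y - (n - p * x) = p * (x - y) by ring] at this
  have := Int.eq_zero_of_abs_lt_dvd (hpq.symm.dvd_of_dvd_mul_left hdvd) (by rw [abs_lt]; omega)
  omega

lemma image_Ioc_sub_mul_emod {p q : ℤ} (hq : 0 < q) (hpq : IsCoprime p q) (n a : ℤ) :
    (Ioc a (a + q)).image (fun k => (n - p * k) % q) = Ico 0 q := by
  refine eq_of_subset_of_card_le (fun r hr => ?_) ?_
  · obtain ⟨k, -, rfl⟩ := mem_image.mp hr
    exact mem_Ico.mpr ⟨Int.emod_nonneg _ hq.ne', Int.emod_lt_of_pos _ hq⟩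
  · rw [card_image_of_injOn (injOn_sub_mul_emod hpq n a), Int.card_Ioc, Int.card_Ico]
    omega

lemma sum_Ioc_sub_mul_emod {p q : ℤ} (hq : 0 < q) (hpq : IsCoprime p q) (n a : ℤ) :
    ∑ k ∈ Ioc a (a + q), (n - p * k) % q = ∑ r ∈ Ico 0 q, r := by
  rw [← image_Ioc_sub_mul_emod hq hpq n a, sum_image (injOn_sub_mul_emod hpq n a)]

lemma abs_two_mul_mul_sum_Ioc_ediv_sub_le {p q : ℤ} (hp : 0 < p) (hq : 0 < q) (hpq : IsCoprime p q)
    {n : ℤ} (hn : 0 ≤ n) :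
    |2 * p * q * ∑ k ∈ Ioc 0 (n / p), (n - p * k) / q - (n ^ 2 - (p + q - 1) * n)|
      ≤ p * (p + q) + 2 * p * q * q := by
  set K := n / p
  set a := n % p
  have hK : 0 ≤ K := Int.ediv_nonneg hn hp.le
  have hna : n = p * K + a := (Int.mul_ediv_add_emod n p).symm
  have ha : 0 ≤ a ∧ a < p := ⟨Int.emod_nonneg n hp.ne', Int.emod_lt_of_pos n hp⟩
  set S := ∑ k ∈ Ioc 0 K, (n - p * k) / q
  set R := ∑ k ∈ Ioc 0 K, (n - p * k) % q
  set P := ∑ r ∈ Ico 0 q, r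
  have hSR : q * S + R = K * n - p * ∑ k ∈ Ioc 0 K, k := by
    simp only [S, R, mul_sum, ← sum_add_distrib, Int.mul_ediv_add_emod, sum_sub_distrib, sum_const,
      Int.card_Ioc, sub_zero, Int.toNat_of_nonneg hK, nsmul_eq_mul]
  have hR : |q * R - K * P| ≤ q * q * (q - 1) :=
    abs_mul_sum_Ioc_sub_le_of_sum_Ioc hq
      (fun k => ⟨Int.emod_nonneg _ hq.ne', by linarith [Int.emod_lt_of_pos (n - p * k) hq]⟩)
      (sum_Ioc_sub_mul_emod hq hpq n) hK
  have key : q * (2 * p * q * S - (n ^ 2 - (p + q - 1) * n))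
      = q * (a * (p + q - 1 - a)) - 2 * p * (q * R - K * P) := by
    linear_combination 2 * p * q * hSR - p * p * q * two_mul_sum_Ioc_zero_id hK
      - p * K * two_mul_sum_Ico_zero_id hq.le + q * (p * K - a + p + q - 1 - n) * hna
  have hmain : |a * (p + q - 1 - a)| ≤ p * (p + q) := by
    rw [abs_le]; constructor <;> nlinarith
  refine le_of_mul_le_mul_left ?_ hq
  calc q * |2 * p * q * S - (n ^ 2 - (p + q - 1) * n)|
      = |q * (a * (p + q - 1 - a)) - 2 * p * (q * R - K * P)| := by
        rw [← key, abs_mul, abs_of_pos hq]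
    _ ≤ q * |a * (p + q - 1 - a)| + 2 * p * |q * R - K * P| := by
        refine (abs_sub _ _).trans ?_
        rw [abs_mul q, abs_mul (2 * p), abs_of_pos hq, abs_of_pos (by positivity : (0 : ℤ) < 2 * p)]
    _ ≤ q * (p * (p + q)) + 2 * p * (q * q * (q - 1)) := by gcongr
    _ ≤ q * (p * (p + q) + 2 * p * q * q) := by nlinarith

lemma Set.ncard_setOf_fst_mem_snd_mem {α β : Type*} (s : Finset α) (t : α → Finset β) :
    {x : α × β | x.1 ∈ s ∧ x.2 ∈ t x.1}.ncard = ∑ a ∈ s, #(t a) := by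
  have : {x : α × β | x.1 ∈ s ∧ x.2 ∈ t x.1} = Equiv.sigmaEquivProd α β '' ↑(s.sigma t) := by
    ext ⟨a, b⟩
    simp
  rw [this, Set.ncard_image_of_injective _ (Equiv.injective _), Set.ncard_coe_finset, card_sigma]

lemma ncard_triangle_eq_sum {p q : ℤ} (hp : 0 < p) (hq : 0 < q) (n : ℤ) :
    ({x : ℤ × ℤ | 0 < x.1 ∧ 0 < x.2 ∧ q * x.2 + p * x.1 ≤ n}.ncard : ℤ)
      = ∑ k ∈ Ioc 0 (n / p), (n - p * k) / q := by
  have hset : {x : ℤ × ℤ | 0 < x.1 ∧ 0 < x.2 ∧ q * x.2 + p * x.1 ≤ n}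
      = {x : ℤ × ℤ | x.1 ∈ Ioc 0 (n / p) ∧ x.2 ∈ Ioc 0 ((n - p * x.1) / q)} := by
    ext ⟨k, m⟩
    simp only [Set.mem_ofPred_eq, mem_Ioc, Int.le_ediv_iff_mul_le hp, Int.le_ediv_iff_mul_le hq]
    constructor
    · rintro ⟨hk, hm, h⟩
      refine ⟨⟨hk, ?_⟩, hm, ?_⟩ <;> nlinarith
    · rintro ⟨⟨hk, -⟩, hm, h⟩
      exact ⟨hk, hm, by linarith⟩
  rw [hset, Set.ncard_setOf_fst_mem_snd_mem (Ioc 0 (n / p)) fun k => Ioc 0 ((n - p * k) / q),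
    Nat.cast_sum]
  refine sum_congr rfl fun k hk => ?_
  have hpk : p * k ≤ n := by
    have := (Int.le_ediv_iff_mul_le hp).mp (mem_Ioc.mp hk).2
    linarith
  rw [Int.card_Ioc, sub_zero, Int.toNat_of_nonneg (Int.ediv_nonneg (by linarith) hq.le)]

lemma Real.sqrt_div_eq_div_sqrt_mul {a : ℝ} (ha : 0 ≤ a) (b : ℝ) : √(a / b) = a / √(a * b) := by
  have : a / b = a ^ 2 / (a * b) := by
    rcases eq_or_ne a 0 with rfl | h
    · simp
    · rw [sq, mul_div_mul_left _ _ h]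
  rw [this, Real.sqrt_div (sq_nonneg a), Real.sqrt_sq ha]

lemma N_div_eq_ncard {p q : ℕ} (hq : 0 < q) (α : ℝ) :
    N ((p : ℝ) / q) α = {x : ℤ × ℤ | 0 < x.1 ∧ 0 < x.2 ∧
      (q : ℤ) * x.2 + (p : ℤ) * x.1 ≤ ⌊α * √((p : ℝ) * q)⌋}.ncard := by
  have hQ : (0 : ℝ) < q := by exact_mod_cast hq
  have hs : √((p : ℝ) * q) = √((p : ℝ) / q) * q := by
    have hsq : √(q : ℝ) ≠ 0 := (Real.sqrt_pos.mpr hQ).ne'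
    rw [Real.sqrt_div' _ hQ.le, Real.sqrt_mul' _ hQ.le]
    field_simp
    rw [Real.sq_sqrt hQ.le]
  unfold N
  congr 1
  ext ⟨k, m⟩
  simp only [Set.mem_ofPred_eq, Int.le_floor, hs]
  push_cast
  refine and_congr_right fun _ => and_congr_right fun _ => ?_
  rw [← sub_nonneg, ← sub_nonneg (b := (q : ℝ) * m + p * k),
    show α * (√((p : ℝ) / q) * q) - (q * m + p * k) = q * (α * √((p : ℝ) / q) - k * (p / q) - m) by
      field_simp; ring]
  exact (mul_nonneg_iff_of_pos_left hQ).symm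

lemma abs_sub_main_term_le {P Q s α f S E : ℝ} (hP : 1 ≤ P) (hQ : 1 ≤ Q) (hs : 0 < s)
    (hsPQ : s ^ 2 = P * Q) (hf : f ∈ Set.Ico 0 1)
    (hS : |2 * P * Q * S - ((α * s - f) ^ 2 - (P + Q - 1) * (α * s - f))| ≤ E) :
    |S - (α ^ 2 / 2 - (P + Q - 1 + 2 * f) / s / 2 * α)| ≤ E + P + Q := by
  obtain ⟨hf0, hf1⟩ := hf
  have hPQ : 1 ≤ 2 * P * Q := by nlinarith
  have key : 2 * P * Q * (S - (α ^ 2 / 2 - (P + Q - 1 + 2 * f) / s / 2 * α))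
      = (2 * P * Q * S - ((α * s - f) ^ 2 - (P + Q - 1) * (α * s - f))) + f * (f + P + Q - 1) := by
    rw [mul_assoc 2 P Q, ← hsPQ]
    field_simp
    ring
  have hg : |f * (f + P + Q - 1)| ≤ P + Q := by
    rw [abs_le]; constructor <;> nlinarith
  have hE : 0 ≤ E := (abs_nonneg _).trans hS
  refine le_of_mul_le_mul_left ?_ (by linarith : (0 : ℝ) < 2 * P * Q)
  calc 2 * P * Q * |S - (α ^ 2 / 2 - (P + Q - 1 + 2 * f) / s / 2 * α)|
      ≤ E + (P + Q) := by
        rw [← abs_of_pos (by linarith : (0 : ℝ) < 2 * P * Q), ← abs_mul, key]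
        exact (abs_add_le _ _).trans (add_le_add hS hg)
    _ ≤ 2 * P * Q * (E + P + Q) := by nlinarith

theorem stmt_3 (p q : ℕ) (hp : 0 < p) (hq : 0 < q) (hpq : Nat.Coprime p q) :
    ∃ C : ℝ, ∀ α : ℝ, 1 ≤ α →
      |(N ((p : ℝ) / q) α : ℝ) - (α ^ 2 / 2 -
        (Real.sqrt ((p : ℝ) / q) + Real.sqrt ((q : ℝ) / p) -
          Real.sqrt (1 / ((p : ℝ) * q)) *
            (1 - 2 * Int.fract (α * Real.sqrt ((p : ℝ) * q)))) / 2 * α)| ≤ C := by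
  have hP : (1 : ℝ) ≤ p := by exact_mod_cast hp
  have hQ : (1 : ℝ) ≤ q := by exact_mod_cast hq
  have hpqZ : IsCoprime (p : ℤ) q := Int.isCoprime_iff_gcd_eq_one.mpr hpq
  refine ⟨((p * (p + q) + 2 * p * q * q : ℤ) : ℝ) + p + q, fun α hα => ?_⟩
  rw [N_div_eq_ncard hq]
  set s := √((p : ℝ) * q)
  have hs : 0 < s := Real.sqrt_pos.mpr (by positivity)
  have hcoeff : √((p : ℝ) / q) + √((q : ℝ) / p) - √(1 / ((p : ℝ) * q)) * (1 - 2 * Int.fract (α * s))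
      = (p + q - 1 + 2 * Int.fract (α * s)) / s := by
    rw [Real.sqrt_div_eq_div_sqrt_mul (Nat.cast_nonneg p), Real.sqrt_div_eq_div_sqrt_mul
      (Nat.cast_nonneg q), Real.sqrt_div_eq_div_sqrt_mul zero_le_one, one_mul, mul_comm (q : ℝ)]
    field_simp
    ring
  have hn : 0 ≤ ⌊α * s⌋ := Int.floor_nonneg.mpr (by positivity)
  have hcount : ({x : ℤ × ℤ | 0 < x.1 ∧ 0 < x.2 ∧ (q : ℤ) * x.2 + (p : ℤ) * x.1 ≤ ⌊α * s⌋}.ncard : ℝ)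
      = ((∑ k ∈ Ioc 0 (⌊α * s⌋ / p), (⌊α * s⌋ - p * k) / q : ℤ) : ℝ) := by
    exact_mod_cast ncard_triangle_eq_sum (Int.natCast_pos.mpr hp) (Int.natCast_pos.mpr hq) _
  have hbound := abs_two_mul_mul_sum_Ioc_ediv_sub_le (Int.natCast_pos.mpr hp)
    (Int.natCast_pos.mpr hq) hpqZ hn
  rw [hcoeff]
  refine abs_sub_main_term_le hP hQ hs (Real.sq_sqrt (by positivity))
    ⟨Int.fract_nonneg _, Int.fract_lt_one _⟩ ?_
  rw [Int.self_sub_fract, hcount]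
  exact_mod_cast hbound
end

section
/- If β > 0 is irrational, then N_β(α) = α²/2 − ((√β + √(1/β))/2)·α + o_β(α) as α → ∞; in particular the limit lim_{α→∞} (N_β(α) − α²/2)/α exists and equals −(√β + √(1/β))/2 < −1. -/
/-!
Counting column by column, `N_β(α) = ∑_{k=1}^{K} ⌊S - kβ⌋` with `S = α√β` and
`K = ⌊(S - 1)/β⌋`. Writing `⌊x⌋ = x - 1/2 - ({x} - 1/2)`, the smooth part is
`α²/2 - (√β + 1/√β)/2 · α + O(1)`, and the sum of the `{S - kβ} - 1/2` is `o(K)` because the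
rotation by the irrational `β` is equidistributed. For the latter, cut the sum into blocks of
length `q`, where `|β - p/q| ≤ 1/q²` and `q` is large. Along a block the rational rotation by
`p/q` permutes the points `r/q`, which gives the sum of its floors exactly, and the floors along
the true rotation are squeezed between those of the rational rotation started at `S ∓ 1/q`; so
every block contributes `O(1)`.
-/

open Finset

lemma sum_range_natCast (q : ℕ) : ∑ r ∈ range q, (r : ℝ) = q * (q - 1) / 2 := by
  induction q with
  | zero => simp
  | succ n ih => rw [sum_range_succ, ih]; push_cast; ring

lemma fract_intCast_add_div {q : ℕ} (hq : 0 < q) (n : ℤ) {v : ℝ} (hv₀ : 0 ≤ v) (hv₁ : v < 1) :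
    Int.fract ((n + v) / q) = ((n % q : ℤ) + v) / q := by
  have hq' : (0 : ℝ) < q := by exact_mod_cast hq
  have hmod₀ : (0 : ℤ) ≤ n % q := Int.emod_nonneg _ (by exact_mod_cast hq.ne')
  have hmod₁ : ((n % q : ℤ) : ℝ) + 1 ≤ q := by
    exact_mod_cast Int.emod_lt_of_pos n (by exact_mod_cast hq)
  rw [Int.fract_eq_iff]
  refine ⟨by positivity, by rw [div_lt_one hq']; linarith, n / q, ?_⟩
  have hdiv : ((n % q : ℤ) : ℝ) + q * (n / q : ℤ) = n := by exact_mod_cast Int.emod_add_mul_ediv n q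
  field_simp
  linarith

lemma sum_range_emod_add_mul {M : Type*} [AddCommMonoid M] {q : ℕ} (hq : 0 < q) {p : ℤ}
    (hp : IsCoprime p q) (m : ℤ) (g : ℤ → M) :
    ∑ j ∈ range q, g ((m + j * p) % q) = ∑ r ∈ range q, g r := by
  have hq' : (0 : ℤ) < q := by exact_mod_cast hq
  have hmod₀ (j : ℕ) : 0 ≤ (m + j * p) % q := Int.emod_nonneg _ hq'.ne'
  have hmaps : ∀ j ∈ range q, ((m + j * p) % q).toNat ∈ range q := fun j _ => by
    have := Int.emod_lt_of_pos (m + j * p) hq'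
    simp only [mem_range]; omega
  have hinj : Set.InjOn (fun j : ℕ => ((m + j * p) % q).toNat) (range q) := by
    intro i hi j hj hij
    simp only [coe_range, Set.mem_Iio] at hi hj
    have hmodeq : m + i * p ≡ m + j * p [ZMOD q] := by
      have := hmod₀ i; have := hmod₀ j
      simp only at hij; unfold Int.ModEq; omega
    have hdvd : (q : ℤ) ∣ (j - i : ℤ) * p := by
      convert hmodeq.dvd using 1; ring
    have := Int.eq_zero_of_abs_lt_dvd (hp.symm.dvd_of_dvd_mul_right hdvd) (by rw [abs_lt]; omega)
    omega
  refine sum_nbij (fun j => ((m + j * p) % q).toNat) hmaps hinj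
    (surjOn_of_injOn_of_card_le _ hmaps hinj le_rfl) fun j _ => ?_
  simp only [Int.toNat_of_nonneg (hmod₀ j)]

lemma sum_fract_add_mul_div {q : ℕ} (hq : 0 < q) {p : ℤ} (hp : IsCoprime p q) (y : ℝ) :
    ∑ j ∈ range q, Int.fract (y + j * p / q) = Int.fract (q * y) + (q - 1) / 2 := by
  have hq' : (0 : ℝ) < q := by exact_mod_cast hq
  have hterm (j : ℕ) :
      Int.fract (y + j * p / q) = (((⌊q * y⌋ + j * p) % q : ℤ) + Int.fract (q * y)) / q := by
    rw [← fract_intCast_add_div hq _ (Int.fract_nonneg _) (Int.fract_lt_one _)]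
    congr 1
    rw [Int.fract]; push_cast; field_simp; ring
  simp_rw [hterm, ← sum_div, sum_add_distrib,
    sum_range_emod_add_mul hq hp ⌊q * y⌋ (fun r : ℤ => (r : ℝ))]
  push_cast
  rw [sum_range_natCast, sum_const, card_range, nsmul_eq_mul]
  field_simp
  ring

lemma sum_floor_add_mul_div {q : ℕ} (hq : 0 < q) {p : ℤ} (hp : IsCoprime p q) (y : ℝ) :
    ∑ j ∈ range q, (⌊y + j * p / q⌋ : ℝ) = ⌊q * y⌋ + (p - 1) * (q - 1) / 2 := by
  have hq' : (0 : ℝ) < q := by exact_mod_cast hq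
  have h := sum_fract_add_mul_div hq hp y
  simp only [Int.fract, sum_sub_distrib, sum_add_distrib, ← sum_div, ← sum_mul, sum_const,
    card_range, nsmul_eq_mul, sum_range_natCast] at h
  field_simp at h ⊢
  linarith

lemma abs_sum_floor_add_mul_sub_le_one {q : ℕ} (hq : 0 < q) {p : ℤ} (hp : IsCoprime p q)
    {γ : ℝ} (hγ : |γ - p / q| ≤ 1 / q ^ 2) (y : ℝ) :
    |∑ j ∈ range q, (⌊y + j * γ⌋ : ℝ) - (⌊q * y⌋ + (p - 1) * (q - 1) / 2)| ≤ 1 := by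
  have hq' : (0 : ℝ) < q := by exact_mod_cast hq
  have hclose : ∀ j ∈ range q, |j * γ - j * p / q| ≤ 1 / q := by
    intro j hj
    have hj : (j : ℝ) ≤ q := by exact_mod_cast (mem_range.mp hj).le
    rw [mul_div_assoc, ← mul_sub, abs_mul, Nat.abs_cast]
    calc (j : ℝ) * |γ - p / q| ≤ q * (1 / q ^ 2) := mul_le_mul hj hγ (abs_nonneg _) hq'.le
      _ = 1 / q := by field_simp
  have hlow : ∑ j ∈ range q, (⌊(y - 1 / q) + j * p / q⌋ : ℝ) ≤ ∑ j ∈ range q, (⌊y + j * γ⌋ : ℝ) :=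
    sum_le_sum fun j hj => by
      have := (abs_le.mp (hclose j hj)).1
      exact Int.cast_le.mpr (Int.floor_le_floor (by linarith))
  have hupp : ∑ j ∈ range q, (⌊y + j * γ⌋ : ℝ) ≤ ∑ j ∈ range q, (⌊(y + 1 / q) + j * p / q⌋ : ℝ) :=
    sum_le_sum fun j hj => by
      have := (abs_le.mp (hclose j hj)).2
      exact Int.cast_le.mpr (Int.floor_le_floor (by linarith))
  rw [sum_floor_add_mul_div hq hp, mul_sub, mul_one_div_cancel hq'.ne', Int.floor_sub_one,
    Int.cast_sub, Int.cast_one] at hlow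
  rw [sum_floor_add_mul_div hq hp, mul_add, mul_one_div_cancel hq'.ne', Int.floor_add_one,
    Int.cast_add, Int.cast_one] at hupp
  rw [abs_le]
  constructor <;> linarith

lemma abs_sum_fract_sub_half_le_two {q : ℕ} (hq : 0 < q) {p : ℤ} (hp : IsCoprime p q) {γ : ℝ}
    (hγ : |γ - p / q| ≤ 1 / q ^ 2) (y : ℝ) :
    |∑ j ∈ range q, (Int.fract (y + j * γ) - 1 / 2)| ≤ 2 := by
  have hq' : (0 : ℝ) < q := by exact_mod_cast hq
  have hq₁ : (1 : ℝ) ≤ q := by exact_mod_cast hq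
  have hlin : ∑ j ∈ range q, (y + j * γ - 1 / 2) = q * y + γ * (q * (q - 1) / 2) - q / 2 := by
    simp only [sum_sub_distrib, sum_add_distrib, ← sum_mul, sum_range_natCast, sum_const,
      card_range, nsmul_eq_mul]
    ring
  have hdecomp : ∑ j ∈ range q, (Int.fract (y + j * γ) - 1 / 2)
      = (Int.fract (q * y) - 1 / 2) + (γ - p / q) * (q * (q - 1) / 2)
        - (∑ j ∈ range q, (⌊y + j * γ⌋ : ℝ) - (⌊q * y⌋ + (p - 1) * (q - 1) / 2)) := by
    simp only [Int.fract, sub_right_comm _ (⌊_⌋ : ℝ), sum_sub_distrib] at hlin ⊢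
    rw [hlin]; field_simp; ring
  have hfr : |Int.fract (q * y) - 1 / 2| ≤ 1 / 2 := by
    rw [abs_le]
    constructor <;> linarith [Int.fract_nonneg (q * y), Int.fract_lt_one (q * y)]
  have hδ : |(γ - p / q) * (q * (q - 1) / 2)| ≤ 1 / 2 := by
    rw [abs_mul, abs_of_nonneg (a := (q : ℝ) * (q - 1) / 2) (by nlinarith)]
    calc |γ - p / q| * (q * (q - 1) / 2) ≤ 1 / q ^ 2 * (q * q / 2) := by gcongr; linarith
      _ = 1 / 2 := by field_simp
  rw [hdecomp]
  calc _ ≤ |Int.fract (q * y) - 1 / 2| + |(γ - p / q) * (q * (q - 1) / 2)|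
        + |∑ j ∈ range q, (⌊y + j * γ⌋ : ℝ) - (⌊q * y⌋ + (p - 1) * (q - 1) / 2)| :=
          (abs_sub _ _).trans (add_le_add_left (abs_add_le _ _) _)
    _ ≤ 2 := by linarith [abs_sum_floor_add_mul_sub_le_one hq hp hγ y]

-- Rationals with denominator `≤ Q` stay some `δ > 0` away from `ξ`, while Dirichlet's
-- approximations come arbitrarily close.
lemma Irrational.exists_rat_abs_sub_le_one_div_den_sq_lt_den {ξ : ℝ} (hξ : Irrational ξ) (Q : ℕ) :
    ∃ r : ℚ, Q < r.den ∧ |ξ - r| ≤ 1 / (r.den : ℝ) ^ 2 := by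
  obtain ⟨δ, hδ, hδ₀⟩ := ((hξ.eventually_forall_le_dist_cast_rat_of_den_le Q).filter_mono
    nhdsWithin_le_nhds |>.and (self_mem_nhdsWithin (s := Set.Ioi (0 : ℝ)))).exists
  obtain ⟨n, hn⟩ := exists_nat_gt (1 / δ)
  have hn' : (0 : ℝ) < n := (one_div_pos.mpr hδ₀).trans hn
  obtain ⟨r, hr, hrn⟩ := Real.exists_rat_abs_sub_le_and_den_le ξ (Nat.cast_pos.mp hn')
  have hden : (1 : ℝ) ≤ r.den := by exact_mod_cast r.pos
  have hrn' : (r.den : ℝ) ≤ n := by exact_mod_cast hrn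
  have hbound : |ξ - r| ≤ 1 / (r.den : ℝ) ^ 2 := hr.trans <| by
    rw [sq]; gcongr; linarith
  refine ⟨r, ?_, hbound⟩
  by_contra! hQ
  have hfar := hδ r hQ
  rw [Real.dist_eq] at hfar
  have hlt : 1 / ((n + 1 : ℝ) * r.den) < δ :=
    calc _ ≤ 1 / (n : ℝ) := one_div_le_one_div_of_le hn' (by nlinarith [hden])
      _ < δ := (one_div_lt hn' hδ₀).mpr hn
  linarith

noncomputable def rotationDiscrepancy (γ x : ℝ) (K : ℕ) : ℝ :=
  ∑ k ∈ range K, (Int.fract (x + k * γ) - 1 / 2)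

lemma rotationDiscrepancy_add (γ x : ℝ) (K L : ℕ) :
    rotationDiscrepancy γ x (K + L) =
      rotationDiscrepancy γ x K + rotationDiscrepancy γ (x + K * γ) L := by
  simp only [rotationDiscrepancy, sum_range_add, Nat.cast_add, add_mul, add_assoc]

lemma abs_rotationDiscrepancy_le (γ x : ℝ) (K : ℕ) : |rotationDiscrepancy γ x K| ≤ K / 2 := by
  refine (abs_sum_le_sum_abs _ _).trans ?_
  calc ∑ k ∈ range K, |Int.fract (x + k * γ) - 1 / 2| ≤ ∑ _k ∈ range K, (1 / 2 : ℝ) :=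
        sum_le_sum fun k _ => abs_le.mpr ⟨by linarith [Int.fract_nonneg (x + k * γ)],
          by linarith [Int.fract_lt_one (x + k * γ)]⟩
    _ = K / 2 := by simp [div_eq_mul_inv]

lemma abs_rotationDiscrepancy_le_of_forall_abs_le {γ B : ℝ} {q : ℕ} (hq : 0 < q)
    (hB : ∀ y, |rotationDiscrepancy γ y q| ≤ B) (x : ℝ) (K : ℕ) :
    |rotationDiscrepancy γ x K| ≤ (K / q : ℕ) * B + q / 2 := by
  suffices h : ∀ a b : ℕ, ∀ x, |rotationDiscrepancy γ x (a * q + b)| ≤ a * B + b / 2 by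
    refine (Nat.div_add_mod' K q ▸ h (K / q) (K % q) x).trans ?_
    have : ((K % q : ℕ) : ℝ) ≤ q := by exact_mod_cast (Nat.mod_lt K hq).le
    linarith
  intro a b
  induction a with
  | zero => exact fun x => by simpa using abs_rotationDiscrepancy_le γ x b
  | succ a ih =>
    intro x
    rw [show (a + 1) * q + b = q + (a * q + b) by ring, rotationDiscrepancy_add]
    calc _ ≤ B + (a * B + b / 2) := (abs_add_le _ _).trans (add_le_add (hB x) (ih _))
      _ = (a + 1 : ℕ) * B + b / 2 := by push_cast; ring

lemma Irrational.exists_abs_rotationDiscrepancy_le {γ : ℝ} (hγ : Irrational γ) {ε : ℝ}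
    (hε : 0 < ε) : ∃ C, ∀ x K, |rotationDiscrepancy γ x K| ≤ ε * K + C := by
  obtain ⟨r, hr, hγr⟩ := hγ.exists_rat_abs_sub_le_one_div_den_sq_lt_den ⌈2 / ε⌉₊
  have hq : (0 : ℝ) < r.den := by exact_mod_cast r.pos
  have hblock (y : ℝ) : |rotationDiscrepancy γ y r.den| ≤ 2 := by
    have hcop : IsCoprime r.num r.den := Int.isCoprime_iff_gcd_eq_one.mpr r.reduced
    simpa [Rat.cast_def, rotationDiscrepancy] using
      abs_sum_fract_sub_half_le_two r.pos hcop (by simpa [Rat.cast_def] using hγr) y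
  refine ⟨r.den / 2, fun x K => (abs_rotationDiscrepancy_le_of_forall_abs_le r.pos hblock x K).trans
    (add_le_add_left ?_ _)⟩
  have h2 : 2 / ε < r.den := (Nat.le_ceil _).trans_lt (by exact_mod_cast hr)
  calc ((K / r.den : ℕ) : ℝ) * 2 ≤ K / r.den * 2 := by gcongr; exact Nat.cast_div_le
    _ = 2 / r.den * K := by ring
    _ ≤ ε * K := by
      gcongr
      rw [div_lt_iff₀ hε] at h2
      rw [div_le_iff₀ hq]; linarith

lemma ncard_lattice_points_under_graph (f : ℤ → ℝ) (K : ℕ) (hf : ∀ k : ℤ, K < k → f k < 1) :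
    {p : ℤ × ℤ | 0 < p.1 ∧ 0 < p.2 ∧ (p.2 : ℝ) ≤ f p.1}.ncard =
      ∑ k ∈ range K, ⌊f (k + 1)⌋₊ := by
  let e : (Σ _ : ℕ, ℕ) ↪ ℤ × ℤ :=
    ⟨fun km => (km.1 + 1, km.2 + 1), fun ⟨_, _⟩ ⟨_, _⟩ h => by
      simp only [Prod.mk.injEq, add_left_inj, Nat.cast_inj] at h
      obtain ⟨rfl, rfl⟩ := h
      rfl⟩
  have hset : {p : ℤ × ℤ | 0 < p.1 ∧ 0 < p.2 ∧ (p.2 : ℝ) ≤ f p.1} =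
      ↑(((range K).sigma fun k => range ⌊f (k + 1)⌋₊).map e) := by
    ext ⟨a, b⟩
    simp only [Set.mem_ofPred_eq, coe_map, Set.mem_image, mem_coe, mem_sigma, mem_range]
    constructor
    · rintro ⟨ha, hb, hab⟩
      obtain ⟨k, rfl⟩ : ∃ k : ℕ, a = k + 1 := ⟨(a - 1).toNat, by omega⟩
      obtain ⟨m, rfl⟩ : ∃ m : ℕ, b = m + 1 := ⟨(b - 1).toNat, by omega⟩
      refine ⟨⟨k, m⟩, ⟨show k < K from ?_, show m < ⌊f (k + 1)⌋₊ from ?_⟩, rfl⟩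
      · by_contra! hK
        have := hf (k + 1) (by omega)
        push_cast at hab
        linarith [(Nat.cast_nonneg m : (0 : ℝ) ≤ m)]
      · rw [← Nat.add_one_le_iff, Nat.le_floor_iff' (Nat.succ_ne_zero m)]
        exact_mod_cast hab
    · rintro ⟨⟨k, m⟩, ⟨-, hm⟩, he⟩
      obtain ⟨rfl, rfl⟩ := Prod.mk.inj he
      rw [← Nat.add_one_le_iff, Nat.le_floor_iff' (Nat.succ_ne_zero m)] at hm
      refine ⟨by positivity, by positivity, by exact_mod_cast hm⟩
  rw [hset, Set.ncard_coe_finset, card_map, card_sigma]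
  simp

lemma N_eq_sub_rotationDiscrepancy {β : ℝ} (hβ : 0 < β) (α : ℝ) {K : ℕ}
    (hK : K = ⌊(α * √β - 1) / β⌋₊) :
    (N β α : ℝ) = K * (α * √β) - β * (K * (K + 1) / 2) - K / 2
      - rotationDiscrepancy (-β) (α * √β - β) K := by
  set S := α * √β
  have hcount : N β α = ∑ k ∈ range K, ⌊S - (k + 1) * β⌋₊ := by
    rw [N, ncard_lattice_points_under_graph (fun k : ℤ => S - k * β) K]
    · push_cast; rfl
    · intro k hk
      have : (S - 1) / β < k := (Nat.lt_floor_add_one _).trans_le (by rw [← hK]; exact_mod_cast hk)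
      rw [div_lt_iff₀ hβ] at this
      linarith
  have hterm : ∀ k ∈ range K, (⌊S - (k + 1) * β⌋₊ : ℝ) =
      S - (k + 1) * β - 1 / 2 - (Int.fract (S - β + k * -β) - 1 / 2) := by
    intro k hk
    have hk : ((k + 1 : ℕ) : ℝ) ≤ (S - 1) / β :=
      (Nat.le_floor_iff' k.succ_ne_zero).mp (hK ▸ mem_range.mp hk)
    rw [le_div_iff₀ hβ, Nat.cast_succ] at hk
    rw [natCast_floor_eq_intCast_floor (by linarith), ← Int.self_sub_fract]
    ring_nf
  rw [hcount, Nat.cast_sum, sum_congr rfl hterm, sum_sub_distrib, rotationDiscrepancy]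
  simp only [sum_sub_distrib, sum_const, card_range, nsmul_eq_mul, ← sum_mul, sum_add_distrib,
    sum_range_natCast]
  ring

lemma main_term_eq {t α θ K : ℝ} (ht : 0 < t) (hK : K + θ = (α * t - 1) / t ^ 2) :
    K * (α * t) - t ^ 2 * (K * (K + 1) / 2) - K / 2 =
      α ^ 2 / 2 - (t + t⁻¹) / 2 * α + (1 - θ + t ^ 2 * θ * (1 - θ)) / 2 := by
  obtain rfl : K = (α * t - 1) / t ^ 2 - θ := by linarith
  field_simp
  ring

lemma exists_abs_N_sub_le {β : ℝ} (hβ : 0 < β) {α : ℝ} (hα : 1 ≤ α * √β) :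
    ∃ K : ℕ, K ≤ α / √β ∧
      |(N β α : ℝ) - (α ^ 2 / 2 - (√β + (√β)⁻¹) / 2 * α)
        + rotationDiscrepancy (-β) (α * √β - β) K| ≤ (1 + β) / 2 := by
  have ht : 0 < √β := Real.sqrt_pos.mpr hβ
  have hD : 0 ≤ (α * √β - 1) / β := div_nonneg (by linarith) hβ.le
  set K := ⌊(α * √β - 1) / β⌋₊
  set θ := Int.fract ((α * √β - 1) / β)
  have hKθ : (K : ℝ) + θ = (α * √β - 1) / √β ^ 2 := by
    rw [Real.sq_sqrt hβ.le, natCast_floor_eq_intCast_floor hD, Int.floor_add_fract]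
  refine ⟨K, ?_, ?_⟩
  · calc (K : ℝ) ≤ (α * √β - 1) / β := Nat.floor_le hD
      _ ≤ α * √β / √β ^ 2 := by rw [Real.sq_sqrt hβ.le]; gcongr; linarith
      _ = α / √β := by field_simp
  have hmain := main_term_eq ht hKθ
  rw [Real.sq_sqrt hβ.le] at hmain
  have hθ₀ : 0 ≤ θ := Int.fract_nonneg _
  have hθ₁ : θ < 1 := Int.fract_lt_one _
  have herr : (N β α : ℝ) - (α ^ 2 / 2 - (√β + (√β)⁻¹) / 2 * α)
      + rotationDiscrepancy (-β) (α * √β - β) K = (1 - θ + β * θ * (1 - θ)) / 2 := by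
    rw [N_eq_sub_rotationDiscrepancy hβ α rfl]
    linarith
  rw [herr, abs_le]
  have hθθ₀ : 0 ≤ θ * (1 - θ) := mul_nonneg hθ₀ (sub_nonneg.mpr hθ₁.le)
  have hθθ₁ : θ * (1 - θ) ≤ 1 := by nlinarith
  constructor <;> nlinarith [mul_le_mul_of_nonneg_left hθθ₁ hβ.le, mul_nonneg hβ.le hθθ₀]

lemma isLittleO_N_sub {β : ℝ} (hβ : 0 < β) (hirr : Irrational β) :
    (fun α => (N β α : ℝ) - (α ^ 2 / 2 - (√β + (√β)⁻¹) / 2 * α)) =o[Filter.atTop] id := by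
  have ht : 0 < √β := Real.sqrt_pos.mpr hβ
  refine Asymptotics.isLittleO_iff.mpr fun ε hε => ?_
  obtain ⟨C, hC⟩ := hirr.neg.exists_abs_rotationDiscrepancy_le (half_pos (mul_pos hε ht))
  filter_upwards [Filter.eventually_ge_atTop (1 / √β),
    Filter.eventually_ge_atTop (2 * ((1 + β) / 2 + C) / ε)] with α hα₁ hα₂
  have hα : 1 ≤ α * √β := by rwa [div_le_iff₀ ht] at hα₁
  obtain ⟨K, hK, hN⟩ := exists_abs_N_sub_le hβ hα
  have hD := hC (α * √β - β) K
  have hKα : ε * √β / 2 * K ≤ ε * α / 2 := by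
    calc ε * √β / 2 * K ≤ ε * √β / 2 * (α / √β) := by gcongr
      _ = ε * α / 2 := by field_simp
  rw [div_le_iff₀ hε] at hα₂
  rw [Real.norm_eq_abs, Real.norm_eq_abs, id, abs_of_pos ((one_div_pos.mpr ht).trans_le hα₁)]
  calc _ = |((N β α : ℝ) - (α ^ 2 / 2 - (√β + (√β)⁻¹) / 2 * α)
          + rotationDiscrepancy (-β) (α * √β - β) K) - rotationDiscrepancy (-β) (α * √β - β) K| :=
        by rw [add_sub_cancel_right]
    _ ≤ (1 + β) / 2 + (ε * √β / 2 * K + C) := (abs_sub _ _).trans (add_le_add hN hD)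
    _ ≤ ε * α := by linarith

lemma two_lt_add_inv {t : ℝ} (ht : 0 < t) (ht₁ : t ≠ 1) : 2 < t + t⁻¹ := by
  have : t + t⁻¹ - 2 = (t - 1) ^ 2 / t := by field_simp; ring
  have : 0 < (t - 1) ^ 2 / t := div_pos (sq_pos_of_ne_zero (sub_ne_zero.mpr ht₁)) ht
  linarith

theorem stmt_4 (β : ℝ) (hβ : 0 < β) (hirr : Irrational β) :
    Filter.Tendsto (fun α : ℝ => ((N β α : ℝ) - α ^ 2 / 2) / α) Filter.atTop
      (nhds (-(Real.sqrt β + Real.sqrt (1 / β)) / 2)) ∧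
    -(Real.sqrt β + Real.sqrt (1 / β)) / 2 < -1 := by
  rw [one_div, Real.sqrt_inv]
  constructor
  · have h := (isLittleO_N_sub hβ hirr).tendsto_div_nhds_zero.add_const (-(√β + (√β)⁻¹) / 2)
    rw [zero_add] at h
    refine h.congr' ?_
    filter_upwards [Filter.eventually_gt_atTop 0] with α hα
    simp only [id]
    field_simp
    ring
  · have hne : √β ≠ 1 := fun h => hirr.ne_one (by rw [← Real.sq_sqrt hβ.le, h, one_pow])
    linarith [two_lt_add_inv (Real.sqrt_pos.mpr hβ) hne]
end

section
/- The set of positive rationals {p/q : q ≥ 1, |p − q| ≤ 2√q + 1} has upper Minkowski (box-counting) dimension at most 3/4. -/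
open Set

/-- Minimal number of open intervals of radius `ε` needed to cover `E`. -/
noncomputable def coveringNumber (E : Set ℝ) (ε : ℝ) : ℕ :=
  sInf {n : ℕ | ∃ s : Finset ℝ, s.card = n ∧ E ⊆ ⋃ x ∈ s, Metric.ball x ε}

/-- Upper Minkowski (box-counting) dimension of a set `E ⊆ ℝ`. -/
noncomputable def minkowskiDim (E : Set ℝ) : ℝ :=
  Filter.limsup (fun ε : ℝ => Real.log (coveringNumber E ε) / Real.log (1 / ε))
    (nhdsWithin 0 (Set.Ioi 0))

def Eset8 : Set ℝ := {x : ℝ | ∃ p q : ℕ, 0 < p ∧ 1 ≤ q ∧ x = (p : ℝ) / q ∧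
      |(p : ℝ) - q| ≤ 2 * Real.sqrt q + 1}

lemma coveringNumber_le {E : Set ℝ} {ε : ℝ} (s : Finset ℝ)
    (h : E ⊆ ⋃ x ∈ s, Metric.ball x ε) : coveringNumber E ε ≤ s.card :=
  Nat.sInf_le ⟨s, rfl, h⟩

set_option maxHeartbeats 1000000 in
lemma main_bound {ε : ℝ} (h0 : 0 < ε) (h1 : ε ≤ 1) :
    (coveringNumber Eset8 ε : ℝ) ≤ 43 * ε ^ (-(3/4) : ℝ) := by
  classical
  set Q : ℕ := ⌈ε ^ (-(1/2) : ℝ)⌉₊ with hQ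
  set L : ℝ := 3 * ε ^ ((1/4) : ℝ) with hL
  set M : ℕ := ⌊6 * ε ^ (-(3/4) : ℝ)⌋₊ + 1 with hM
  set k : ℕ → ℕ := fun q => ⌈2 * Real.sqrt q⌉₊ + 1 with hk
  set F : Finset ℝ := (Finset.Icc 1 Q).biUnion
    (fun q => (Finset.Icc (q - k q) (q + k q)).image (fun p : ℕ => (p : ℝ) / q)) with hF
  set G : Finset ℝ := (Finset.range M).image (fun i : ℕ => (1 - L) + ε * i) with hG
  -- basic positivity facts
  have hε12 : (0:ℝ) < ε ^ (-(1/2) : ℝ) := Real.rpow_pos_of_pos h0 _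
  have hε34 : (0:ℝ) < ε ^ (-(3/4) : ℝ) := Real.rpow_pos_of_pos h0 _
  have hε14 : (0:ℝ) < ε ^ ((1/4) : ℝ) := Real.rpow_pos_of_pos h0 _
  have hεm14 : (0:ℝ) < ε ^ (-(1/4) : ℝ) := Real.rpow_pos_of_pos h0 _
  have hone12 : (1:ℝ) ≤ ε ^ (-(1/2) : ℝ) :=
    Real.one_le_rpow_of_pos_of_le_one_of_nonpos h0 h1 (by norm_num)
  have hone34 : (1:ℝ) ≤ ε ^ (-(3/4) : ℝ) :=
    Real.one_le_rpow_of_pos_of_le_one_of_nonpos h0 h1 (by norm_num)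
  have hMR : (M:ℝ) ≤ 7 * ε ^ (-(3/4) : ℝ) := by
    rw [hM]
    push_cast
    have := Nat.floor_le (show (0:ℝ) ≤ 6 * ε ^ (-(3/4) : ℝ) by positivity)
    linarith
  have hMbig : 6 * ε ^ (-(3/4) : ℝ) < (M:ℝ) := by
    rw [hM]; push_cast; exact Nat.lt_floor_add_one _
  have hεM : 2 * L < ε * M := by
    have h2 : ε * (6 * ε ^ (-(3/4) : ℝ)) < ε * M := by
      exact (mul_lt_mul_iff_right₀ h0).2 hMbig
    have h3 : ε * (6 * ε ^ (-(3/4) : ℝ)) = 2 * L := by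
      rw [hL]
      rw [show ε * (6 * ε ^ (-(3/4) : ℝ)) = 6 * (ε ^ (1:ℝ) * ε ^ (-(3/4) : ℝ)) by
        rw [Real.rpow_one]; ring]
      rw [← Real.rpow_add h0]
      norm_num
      ring
    linarith
  -- cover
  have hcover : Eset8 ⊆ ⋃ x ∈ (F ∪ G), Metric.ball x ε := by
    rintro x ⟨p, q, hp, hq, rfl, habs⟩
    have hqR : (0:ℝ) < (q:ℝ) := by exact_mod_cast hq
    have hsq1 : (1:ℝ) ≤ Real.sqrt q := by
      rw [show (1:ℝ) = Real.sqrt 1 by simp]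
      exact Real.sqrt_le_sqrt (by exact_mod_cast hq)
    rw [Set.mem_iUnion₂]
    by_cases hcase : q ≤ Q
    · -- x is a center itself
      refine ⟨(p:ℝ)/q, ?_, by simpa using h0⟩
      rw [Finset.mem_union]
      left
      rw [hF, Finset.mem_biUnion]
      refine ⟨q, Finset.mem_Icc.2 ⟨hq, hcase⟩, ?_⟩
      rw [Finset.mem_image]
      refine ⟨p, ?_, rfl⟩
      rw [Finset.mem_Icc]
      have hkq : 2 * Real.sqrt q + 1 ≤ (k q : ℝ) := by
        rw [hk]; push_cast
        have := Nat.le_ceil (2 * Real.sqrt q)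
        linarith
      have h2 : (p:ℝ) ≤ q + k q := by
        have := abs_le.1 habs
        linarith [this.2]
      have h3 : (q:ℝ) ≤ p + k q := by
        have := abs_le.1 habs
        linarith [this.1]
      have h2' : p ≤ q + k q := by exact_mod_cast h2
      have h3' : q ≤ p + k q := by exact_mod_cast h3
      exact ⟨by omega, h2'⟩
    · -- large q: point is close to 1
      push_neg at hcase
      have hqQ : (Q:ℝ) < q := by exact_mod_cast hcase
      have hQbig : ε ^ (-(1/2) : ℝ) ≤ (q:ℝ) := le_trans (Nat.le_ceil _) (le_of_lt hqQ)
      have hsqq : ε ^ (-(1/4) : ℝ) ≤ Real.sqrt q := by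
        have h := Real.sqrt_le_sqrt hQbig
        rwa [Real.sqrt_eq_rpow, ← Real.rpow_mul (le_of_lt h0),
          show (-(1/2) : ℝ) * (1/2) = -(1/4) by norm_num] at h
      have hsqpos : (0:ℝ) < Real.sqrt q := lt_of_lt_of_le one_pos hsq1
      have hsqsq : Real.sqrt q * Real.sqrt q = (q:ℝ) := Real.mul_self_sqrt (le_of_lt hqR)
      have hxd : |(p:ℝ)/q - 1| ≤ L := by
        have heq : (p:ℝ)/q - 1 = ((p:ℝ) - q)/q := by field_simp
        rw [heq, abs_div, abs_of_pos hqR]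
        have step1 : |(p:ℝ) - q| / q ≤ (2 * Real.sqrt q + 1) / q := by gcongr
        have step2 : (2 * Real.sqrt q + 1) / q ≤ 3 / Real.sqrt q := by
          rw [div_le_div_iff₀ hqR hsqpos]
          nlinarith [hsqsq, hsq1]
        have step3 : 3 / Real.sqrt q ≤ L := by
          rw [hL]
          have hinv : 1 / Real.sqrt q ≤ ε ^ ((1/4) : ℝ) := by
            rw [div_le_iff₀ hsqpos]
            calc (1:ℝ) = ε ^ ((1/4) : ℝ) * ε ^ (-(1/4) : ℝ) := by
                  rw [← Real.rpow_add h0]; norm_num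
              _ ≤ ε ^ ((1/4) : ℝ) * Real.sqrt q := by
                  exact mul_le_mul_of_nonneg_left hsqq (le_of_lt hε14)
          calc 3 / Real.sqrt q = 3 * (1 / Real.sqrt q) := by ring
            _ ≤ 3 * ε ^ ((1/4) : ℝ) := by linarith [hinv]
        calc |(p:ℝ) - q| / q ≤ (2 * Real.sqrt q + 1) / q := step1
          _ ≤ 3 / Real.sqrt q := step2
          _ ≤ L := step3
      -- x lies in [1-L, 1+L]; cover by grid points
      set x := (p:ℝ)/q with hx
      have hxlb : 1 - L ≤ x := by have := abs_le.1 hxd; linarith [this.1]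
      have hxub : x ≤ 1 + L := by have := abs_le.1 hxd; linarith [this.2]
      have hxM : x - (1 - L) < ε * M := by
        have : x - (1 - L) ≤ 2 * L := by linarith
        linarith [hεM]
      have hynn : 0 ≤ (x - (1 - L)) / ε := by
        apply div_nonneg (by linarith) (by linarith)
      set i : ℕ := ⌊(x - (1 - L)) / ε⌋₊ with hi
      have hiM : i < M := by
        rw [hi]
        apply Nat.floor_lt hynn |>.2
        rw [div_lt_iff₀ h0]
        calc x - (1 - L) < ε * M := hxM
          _ = (M:ℝ) * ε := by ring
      have hfl : (i:ℝ) ≤ (x - (1 - L)) / ε := Nat.floor_le hynn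
      have hfu : (x - (1 - L)) / ε < (i:ℝ) + 1 := Nat.lt_floor_add_one _
      have hfl' : ε * i ≤ x - (1 - L) := by
        have := (le_div_iff₀ h0).1 hfl
        linarith
      have hfu' : x - (1 - L) < ε * i + ε := by
        have := (div_lt_iff₀ h0).1 hfu
        linarith
      refine ⟨(1 - L) + ε * i, ?_, ?_⟩
      · rw [Finset.mem_union]
        right
        rw [hG, Finset.mem_image]
        exact ⟨i, Finset.mem_range.2 hiM, rfl⟩
      · rw [Metric.mem_ball, Real.dist_eq, abs_lt]
        constructor <;> linarith
  -- counting
  have hFcard : (F.card : ℝ) ≤ 9 * Q * Real.sqrt Q := by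
    have h1' : F.card ≤ ∑ q ∈ Finset.Icc 1 Q, (2 * k q + 1) := by
      refine le_trans (Finset.card_biUnion_le) (Finset.sum_le_sum ?_)
      intro q hq
      refine le_trans Finset.card_image_le ?_
      rw [Nat.card_Icc]
      omega
    have hterm : ∀ q ∈ Finset.Icc 1 Q, ((2 * k q + 1 : ℕ) : ℝ) ≤ 9 * Real.sqrt Q := by
      intro q hq
      rw [Finset.mem_Icc] at hq
      have hq1 : (1:ℝ) ≤ Real.sqrt q := by
        rw [show (1:ℝ) = Real.sqrt 1 by simp]
        exact Real.sqrt_le_sqrt (by exact_mod_cast hq.1)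
      have hqQ' : Real.sqrt q ≤ Real.sqrt Q := Real.sqrt_le_sqrt (by exact_mod_cast hq.2)
      have hceil : (⌈2 * Real.sqrt q⌉₊ : ℝ) < 2 * Real.sqrt q + 1 :=
        Nat.ceil_lt_add_one (by positivity)
      rw [hk]
      push_cast
      nlinarith
    have h2' : (F.card : ℝ) ≤ ∑ q ∈ Finset.Icc 1 Q, ((2 * k q + 1 : ℕ) : ℝ) := by
      exact_mod_cast h1'
    calc (F.card : ℝ) ≤ ∑ q ∈ Finset.Icc 1 Q, ((2 * k q + 1 : ℕ) : ℝ) := h2'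
      _ ≤ ∑ _q ∈ Finset.Icc 1 Q, (9 * Real.sqrt Q) := Finset.sum_le_sum hterm
      _ = ((Finset.Icc 1 Q).card : ℝ) * (9 * Real.sqrt Q) := by
          rw [Finset.sum_const, nsmul_eq_mul]
      _ = (Q : ℝ) * (9 * Real.sqrt Q) := by rw [Nat.card_Icc]; norm_num
      _ = 9 * Q * Real.sqrt Q := by ring
  have hcard : (coveringNumber Eset8 ε : ℝ) ≤ (F.card : ℝ) + (M : ℝ) := by
    have h1' : coveringNumber Eset8 ε ≤ (F ∪ G).card := coveringNumber_le _ hcover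
    have h2' : (F ∪ G).card ≤ F.card + G.card := Finset.card_union_le _ _
    have h3' : G.card ≤ M := le_trans (Finset.card_image_le) (by simp)
    have : coveringNumber Eset8 ε ≤ F.card + M := by omega
    exact_mod_cast this
  -- combine
  have hQR : (Q:ℝ) ≤ 2 * ε ^ (-(1/2) : ℝ) := by
    have := Nat.ceil_lt_add_one (le_of_lt hε12)
    rw [hQ]
    push_cast
    linarith [this, hone12]
  have hsqQ : Real.sqrt Q ≤ 2 * ε ^ (-(1/4) : ℝ) := by
    have h := Real.sqrt_le_sqrt hQR
    have h2 : Real.sqrt (2 * ε ^ (-(1/2) : ℝ)) = Real.sqrt 2 * Real.sqrt (ε ^ (-(1/2) : ℝ)) :=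
      Real.sqrt_mul (by norm_num) _
    have h3 : Real.sqrt (ε ^ (-(1/2) : ℝ)) = ε ^ (-(1/4) : ℝ) := by
      rw [Real.sqrt_eq_rpow, ← Real.rpow_mul (le_of_lt h0)]
      norm_num
    have h4 : Real.sqrt 2 ≤ 2 := by
      nlinarith [Real.sq_sqrt (by norm_num : (0:ℝ) ≤ 2), Real.sqrt_nonneg 2]
    rw [h2, h3] at h
    nlinarith [hεm14]
  have hmul : ε ^ (-(1/2) : ℝ) * ε ^ (-(1/4) : ℝ) = ε ^ (-(3/4) : ℝ) := by
    rw [← Real.rpow_add h0]; norm_num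
  calc (coveringNumber Eset8 ε : ℝ) ≤ (F.card : ℝ) + (M : ℝ) := hcard
    _ ≤ 9 * Q * Real.sqrt Q + 7 * ε ^ (-(3/4) : ℝ) := by linarith
    _ ≤ 9 * (2 * ε ^ (-(1/2) : ℝ)) * (2 * ε ^ (-(1/4) : ℝ)) + 7 * ε ^ (-(3/4) : ℝ) := by
        have hQnn : (0:ℝ) ≤ (Q:ℝ) := Nat.cast_nonneg _
        have := Real.sqrt_nonneg (Q:ℝ)
        nlinarith [hQR, hsqQ, hεm14, hε12]
    _ = 36 * (ε ^ (-(1/2) : ℝ) * ε ^ (-(1/4) : ℝ)) + 7 * ε ^ (-(3/4) : ℝ) := by ring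
    _ ≤ 43 * ε ^ (-(3/4) : ℝ) := by rw [hmul]; linarith

lemma dim_le : ∀ δ : ℝ, 0 < δ → minkowskiDim Eset8 ≤ 3/4 + δ := by
  intro δ hδ
  set c : ℝ := min (1/2) ((1/43 : ℝ) ^ (1/δ : ℝ)) with hc
  have hc0 : 0 < c := lt_min (by norm_num) (Real.rpow_pos_of_pos (by norm_num) _)
  have hev : ∀ᶠ ε in nhdsWithin (0:ℝ) (Set.Ioi 0),
      Real.log (coveringNumber Eset8 ε) / Real.log (1/ε) ≤ 3/4 + δ := by
    filter_upwards [Ioo_mem_nhdsGT_of_mem (⟨le_refl (0:ℝ), hc0⟩ : (0:ℝ) ∈ Ico (0:ℝ) c)]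
      with ε hε
    obtain ⟨hε0, hεc⟩ := hε
    have hε1 : ε < 1 := lt_of_lt_of_le hεc (le_trans (min_le_left _ _) (by norm_num))
    have hlogpos : 0 < Real.log (1/ε) := Real.log_pos (one_lt_one_div hε0 hε1)
    have hN : (coveringNumber Eset8 ε : ℝ) ≤ 43 * ε ^ (-(3/4) : ℝ) :=
      main_bound hε0 (le_of_lt hε1)
    have hpow : (43:ℝ) ≤ ε ^ (-δ) := by
      have h1' : ε ^ δ < ((1/43:ℝ) ^ (1/δ:ℝ)) ^ δ :=
        Real.rpow_lt_rpow (le_of_lt hε0) (lt_of_lt_of_le hεc (min_le_right _ _)) hδ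
      have h2' : ((1/43:ℝ) ^ (1/δ:ℝ)) ^ δ = (1/43:ℝ) := by
        rw [← Real.rpow_mul (by norm_num : (0:ℝ) ≤ 1/43),
          one_div_mul_cancel (ne_of_gt hδ), Real.rpow_one]
      have hεδ : ε ^ δ ≤ 1/43 := le_of_lt (h2' ▸ h1')
      have hεδpos : 0 < ε ^ δ := Real.rpow_pos_of_pos hε0 _
      rw [Real.rpow_neg (le_of_lt hε0), show (43:ℝ) = (1/43:ℝ)⁻¹ by norm_num]
      exact inv_anti₀ hεδpos hεδ
    have hε34 : (0:ℝ) < ε ^ (-(3/4) : ℝ) := Real.rpow_pos_of_pos hε0 _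
    have hNle : (coveringNumber Eset8 ε : ℝ) ≤ (1/ε) ^ ((3/4 + δ) : ℝ) := by
      have e1 : (1/ε) ^ ((3/4 + δ) : ℝ) = ε ^ (-(3/4) : ℝ) * ε ^ (-δ : ℝ) := by
        rw [one_div, ← Real.rpow_neg_one ε, ← Real.rpow_mul (le_of_lt hε0),
          show (-1 : ℝ) * (3/4 + δ) = -(3/4) + -δ by ring, Real.rpow_add hε0]
      rw [e1]
      calc (coveringNumber Eset8 ε : ℝ) ≤ 43 * ε ^ (-(3/4) : ℝ) := hN
        _ ≤ ε ^ (-δ : ℝ) * ε ^ (-(3/4) : ℝ) :=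
            mul_le_mul_of_nonneg_right hpow (le_of_lt hε34)
        _ = ε ^ (-(3/4) : ℝ) * ε ^ (-δ : ℝ) := by ring
    rcases Nat.eq_zero_or_pos (coveringNumber Eset8 ε) with h | h
    · rw [h]
      simp only [Nat.cast_zero, Real.log_zero, zero_div]
      linarith
    · have hN1 : (1:ℝ) ≤ (coveringNumber Eset8 ε : ℝ) := by exact_mod_cast h
      have hlogN : Real.log (coveringNumber Eset8 ε) ≤ (3/4 + δ) * Real.log (1/ε) := by
        calc Real.log (coveringNumber Eset8 ε)
            ≤ Real.log ((1/ε) ^ ((3/4 + δ) : ℝ)) := Real.log_le_log (by linarith) hNle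
          _ = (3/4 + δ) * Real.log (1/ε) := Real.log_rpow (by positivity) _
      rw [div_le_iff₀ hlogpos]
      exact hlogN
  have hcob : Filter.IsCoboundedUnder (· ≤ ·) (nhdsWithin (0:ℝ) (Set.Ioi 0))
      (fun ε : ℝ => Real.log (coveringNumber Eset8 ε) / Real.log (1/ε)) := by
    refine Filter.isCoboundedUnder_le_of_eventually_le (x := 0) _ ?_
    filter_upwards [Ioo_mem_nhdsGT_of_mem (⟨le_refl (0:ℝ), one_pos⟩ : (0:ℝ) ∈ Ico (0:ℝ) 1)]
      with ε hε
    exact div_nonneg (Real.log_natCast_nonneg _)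
      (le_of_lt (Real.log_pos (one_lt_one_div hε.1 hε.2)))
  exact Filter.limsup_le_of_le hcob hev

theorem stmt_8 :
    minkowskiDim {x : ℝ | ∃ p q : ℕ, 0 < p ∧ 1 ≤ q ∧ x = (p : ℝ) / q ∧
      |(p : ℝ) - q| ≤ 2 * Real.sqrt q + 1} ≤ 3 / 4 := by
  show minkowskiDim Eset8 ≤ 3 / 4
  exact le_of_forall_pos_le_add fun δ hδ => dim_le δ hδ
end

section
/- Let a₁, …, aₙ be positive real numbers. For every ε > 0 there exist positive integers b₁, …, bₙ and m ∈ ℕ such that |aᵢbᵢ − m| ≤ ε for all i = 1, …, n. -/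
lemma key_approx (n : ℕ) (a : Fin n → ℝ) (ha : ∀ i, 0 < a i) (δ : ℝ) (hδ : 0 < δ) :
    ∃ m : ℕ, 0 < m ∧ ∀ i, ∃ z : ℤ, |(m : ℝ) / a i - z| ≤ δ := by
  obtain ⟨N, hN⟩ := exists_nat_gt (1 / δ)
  have hN0 : 0 < N := by
    rcases Nat.eq_zero_or_pos N with h | h
    · exfalso; rw [h] at hN; simp at hN; exact absurd hN (not_lt.2 (by positivity))
    · exact h
  have hN0' : (0 : ℝ) < N := by exact_mod_cast hN0
  have hNδ : 1 / (N : ℝ) < δ := by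
    rw [div_lt_iff₀ hN0']
    rw [div_lt_iff₀ hδ] at hN
    linarith
  have hcard : Fintype.card (Fin n → Fin N) < Fintype.card (Fin (N ^ n + 1)) := by
    simp
  have hfr : ∀ (m : Fin (N ^ n + 1)) (i : Fin n),
      ⌊Int.fract ((m : ℕ) / a i : ℝ) * N⌋₊ < N := by
    intro m i
    rw [Nat.floor_lt (mul_nonneg (Int.fract_nonneg _) hN0'.le)]
    have := Int.fract_lt_one ((m : ℕ) / a i : ℝ)
    nlinarith
  set g : Fin (N ^ n + 1) → (Fin n → Fin N) := fun m i =>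
    ⟨⌊Int.fract (((m : ℕ) : ℝ) / a i) * N⌋₊, hfr m i⟩ with hg
  obtain ⟨m₁, m₂, hne, heq⟩ := Fintype.exists_ne_map_eq_of_card_lt g hcard
  wlog hlt : (m₁ : ℕ) < (m₂ : ℕ) generalizing m₁ m₂
  · exact this m₂ m₁ hne.symm heq.symm
      (lt_of_le_of_ne (not_lt.1 hlt) (fun h => hne (Fin.ext h.symm)))
  refine ⟨(m₂ : ℕ) - (m₁ : ℕ), Nat.sub_pos_of_lt hlt, fun i => ?_⟩
  refine ⟨⌊((m₂ : ℕ) : ℝ) / a i⌋ - ⌊((m₁ : ℕ) : ℝ) / a i⌋, ?_⟩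
  have hcast : (((m₂ : ℕ) - (m₁ : ℕ) : ℕ) : ℝ) = ((m₂ : ℕ) : ℝ) - ((m₁ : ℕ) : ℝ) := by
    push_cast [Nat.cast_sub hlt.le]; ring
  have hfe : ⌊Int.fract (((m₁ : ℕ) : ℝ) / a i) * N⌋₊ = ⌊Int.fract (((m₂ : ℕ) : ℝ) / a i) * N⌋₊ := by
    have := congrFun heq i
    simpa [hg] using congrArg Fin.val this
  have habs : |Int.fract (((m₂ : ℕ) : ℝ) / a i) * N - Int.fract (((m₁ : ℕ) : ℝ) / a i) * N| < 1 := by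
    have h1 : (⌊Int.fract (((m₂ : ℕ) : ℝ) / a i) * N⌋ : ℤ) = ⌊Int.fract (((m₁ : ℕ) : ℝ) / a i) * N⌋ := by
      rw [← Int.natCast_floor_eq_floor (mul_nonneg (Int.fract_nonneg _) hN0'.le),
        ← Int.natCast_floor_eq_floor (mul_nonneg (Int.fract_nonneg _) hN0'.le)]
      exact_mod_cast hfe.symm
    exact Int.abs_sub_lt_one_of_floor_eq_floor h1
  have hfd : |Int.fract (((m₂ : ℕ) : ℝ) / a i) - Int.fract (((m₁ : ℕ) : ℝ) / a i)| < 1 / N := by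
    rw [lt_div_iff₀ hN0']
    calc |Int.fract (((m₂ : ℕ) : ℝ) / a i) - Int.fract (((m₁ : ℕ) : ℝ) / a i)| * N
        = |Int.fract (((m₂ : ℕ) : ℝ) / a i) * N - Int.fract (((m₁ : ℕ) : ℝ) / a i) * N| := by
          rw [← sub_mul, abs_mul, abs_of_pos hN0']
      _ < 1 := habs
  have e2 := Int.self_sub_floor (((m₂ : ℕ) : ℝ) / a i)
  have e1 := Int.self_sub_floor (((m₁ : ℕ) : ℝ) / a i)
  rw [hcast, sub_div]
  push_cast
  calc |(((m₂:ℕ):ℝ)/a i - ((m₁:ℕ):ℝ)/a i) - ((⌊((m₂:ℕ):ℝ)/a i⌋ : ℝ) - (⌊((m₁:ℕ):ℝ)/a i⌋ : ℝ))|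
      = |Int.fract (((m₂ : ℕ) : ℝ) / a i) - Int.fract (((m₁ : ℕ) : ℝ) / a i)| := by
        rw [Int.fract, Int.fract]; ring_nf
    _ ≤ δ := le_of_lt (lt_of_lt_of_le hfd hNδ.le)

theorem stmt_11 (n : ℕ) (a : Fin n → ℝ) (ha : ∀ i, 0 < a i) (ε : ℝ) (hε : 0 < ε) :
    ∃ b : Fin n → ℕ, ∃ m : ℕ, (∀ i, 0 < b i) ∧
      ∀ i, |a i * (b i : ℝ) - (m : ℝ)| ≤ ε := by
  set A : ℝ := 1 + ∑ i, a i with hA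
  have hsum : (0:ℝ) ≤ ∑ i, a i := Finset.sum_nonneg fun i _ => (ha i).le
  have hA0 : 0 < A := by positivity
  have haA : ∀ i, a i < A := fun i => by
    have : a i ≤ ∑ j, a j :=
      Finset.single_le_sum (fun j _ => (ha j).le) (Finset.mem_univ i)
    linarith
  set δ : ℝ := min ε 1 / A with hδdef
  have hδ : 0 < δ := by
    have : 0 < min ε 1 := lt_min hε one_pos
    positivity
  obtain ⟨m, hm, h⟩ := key_approx n a ha δ hδ
  have hm1 : (1:ℝ) ≤ m := by exact_mod_cast hm
  choose z hz using h
  have key : ∀ i, |a i * (z i : ℝ) - m| < min ε 1 := by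
    intro i
    have h1 : |a i * ((m : ℝ) / a i - z i)| ≤ a i * δ := by
      rw [abs_mul, abs_of_pos (ha i)]
      exact mul_le_mul_of_nonneg_left (hz i) (ha i).le
    have h2 : a i * ((m : ℝ) / a i - z i) = (m : ℝ) - a i * z i := by
      rw [mul_sub, mul_div_cancel₀ _ (ha i).ne']
    have h3 : a i * δ < min ε 1 := by
      have hrw : a i * δ = (a i / A) * min ε 1 := by
        show a i * (min ε 1 / A) = (a i / A) * min ε 1
        ring
      have hlt1 : a i / A < 1 := (div_lt_one hA0).2 (haA i)
      calc a i * δ = (a i / A) * min ε 1 := hrw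
        _ < 1 * min ε 1 := mul_lt_mul_of_pos_right hlt1 (lt_min hε one_pos)
        _ = min ε 1 := one_mul _
    rw [h2] at h1
    rw [abs_sub_comm] at h1
    exact lt_of_le_of_lt h1 h3
  have hzpos : ∀ i, 0 < z i := by
    intro i
    have hk := key i
    have h1 : min ε 1 ≤ 1 := min_le_right _ _
    have habs := abs_lt.1 hk
    have hpos : (0:ℝ) < a i * z i := by linarith
    have : (0:ℝ) < (z i : ℝ) :=
      ((mul_pos_iff.1 hpos).resolve_right (fun h => absurd (ha i) (not_lt.2 h.1.le))).2
    exact_mod_cast this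
  refine ⟨fun i => (z i).toNat, m, fun i => ?_, fun i => ?_⟩
  · show 0 < (z i).toNat
    have h := hzpos i
    omega
  · show |a i * (((z i).toNat : ℕ) : ℝ) - (m : ℝ)| ≤ ε
    have hzt : (((z i).toNat : ℕ) : ℝ) = ((z i : ℤ) : ℝ) := by
      exact_mod_cast congrArg (fun t : ℤ => (t : ℝ)) (Int.toNat_of_nonneg (hzpos i).le)
    rw [hzt]
    exact le_trans (key i).le (min_le_left _ _)
end

section
/- If n₁, …, nₘ are distinct squarefree positive integers, then √n₁, …, √nₘ are linearly independent over ℚ. -/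
/-!
Work in the finite extension `K = ℚ(√n₁, …, √nₘ)` with the trace form `(x, y) ↦ Tr_{K/ℚ}(x y)`.
For `i ≠ j` the product `√nᵢ √nⱼ = √(nᵢ nⱼ)` is irrational, since the product of two distinct
squarefree numbers is not a square; an element whose square is rational but which is not itself
rational has minimal polynomial `X² - c` and hence trace zero. So the `√nᵢ` are pairwise
orthogonal, while `Tr(√nᵢ √nᵢ) = [K : ℚ] nᵢ ≠ 0`, and an orthogonal family of anisotropic
vectors is linearly independent.
-/

open Polynomial IntermediateField

theorem Nat.not_isSquare_mul_of_squarefree {a b : ℕ} (ha : Squarefree a) (hb : Squarefree b)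
    (hne : a ≠ b) : ¬ IsSquare (a * b) := by
  rintro ⟨s, hs⟩
  have hs0 : s ≠ 0 := by rintro rfl; simp [ha.ne_zero, hb.ne_zero] at hs
  refine hne (Nat.factorization_inj ha.ne_zero hb.ne_zero (Finsupp.ext fun p => ?_))
  have hsum := congrArg (Nat.factorization · p) hs
  simp only [Nat.factorization_mul ha.ne_zero hb.ne_zero, Nat.factorization_mul hs0 hs0,
    Finsupp.add_apply] at hsum
  -- the exponents of `p` in `a` and `b` are at most `1` and sum to an even number
  have := ha.natFactorization_le_one p
  have := hb.natFactorization_le_one p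
  omega

theorem minpoly.eq_X_sq_sub_C_of_sq_eq {K L : Type*} [Field K] [Field L] [Algebra K L]
    {x : L} {a : K} (hx : x ^ 2 = algebraMap K L a) (hxK : x ∉ Set.range (algebraMap K L)) :
    minpoly K x = X ^ 2 - C a := by
  have hmonic : (X ^ 2 - C a : K[X]).Monic := monic_X_pow_sub_C a two_ne_zero
  have hroot : Polynomial.aeval x (X ^ 2 - C a : K[X]) = 0 := by simp [hx]
  have hint : IsIntegral K x := ⟨_, hmonic, hroot⟩
  refine (eq_of_monic_of_dvd_of_natDegree_le (minpoly.monic hint) hmonic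
    (minpoly.dvd K x hroot) ?_).symm
  rw [natDegree_X_pow_sub_C]
  exact (minpoly.two_le_natDegree_iff hint).2 hxK

theorem Algebra.trace_eq_zero_of_sq_eq_algebraMap {K L : Type*} [Field K] [Field L] [Algebra K L]
    [FiniteDimensional K L] {x : L} {a : K} (hx : x ^ 2 = algebraMap K L a)
    (hxK : x ∉ Set.range (algebraMap K L)) : Algebra.trace K L x = 0 := by
  rw [trace_eq_finrank_mul_minpoly_nextCoeff, minpoly.eq_X_sq_sub_C_of_sq_eq hx hxK,
    nextCoeff_of_natDegree_pos (by rw [natDegree_X_pow_sub_C]; norm_num), natDegree_X_pow_sub_C]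
  simp

theorem linearIndependent_of_sq_mem_of_mul_not_mem {K L ι : Type*} [Field K] [CharZero K]
    [Field L] [Algebra K L] [FiniteDimensional K L] {v : ι → L}
    (hsq : ∀ i, ∃ a, v i ^ 2 = algebraMap K L a) (hne : ∀ i, v i ≠ 0)
    (hmul : Pairwise fun i j => v i * v j ∉ Set.range (algebraMap K L)) :
    LinearIndependent K v := by
  refine LinearMap.BilinForm.linearIndependent_of_iIsOrtho (B := Algebra.traceForm K L)
    (fun i j hij => ?_) (fun i => ?_)
  · obtain ⟨a, ha⟩ := hsq i
    obtain ⟨b, hb⟩ := hsq j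
    exact Algebra.trace_eq_zero_of_sq_eq_algebraMap (x := v i * v j)
      (by rw [mul_pow, ha, hb, map_mul]) (hmul hij)
  · obtain ⟨a, ha⟩ := hsq i
    have ha0 : a ≠ 0 := by
      rintro rfl
      exact hne i (pow_eq_zero_iff two_ne_zero |>.1 (by simpa using ha))
    rw [Algebra.traceForm_apply, ← sq, ha, Algebra.trace_algebraMap]
    exact smul_ne_zero (Nat.cast_ne_zero.2 Module.finrank_pos.ne') ha0

theorem stmt_15_general (m : ℕ) (n : Fin m → ℕ) (hinj : Function.Injective n)
    (hsf : ∀ i, Squarefree (n i)) :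
    LinearIndependent ℚ (fun i : Fin m => Real.sqrt (n i)) := by
  set K := adjoin ℚ (Set.range fun i => Real.sqrt (n i))
  have hsq (i) : Real.sqrt (n i) ^ 2 = n i := Real.sq_sqrt (Nat.cast_nonneg _)
  have : FiniteDimensional ℚ K := finiteDimensional_adjoin <| by
    rintro _ ⟨i, rfl⟩
    exact ⟨X ^ 2 - C (n i : ℚ), monic_X_pow_sub_C _ two_ne_zero, by simp [hsq]⟩
  let v (i : Fin m) : K := ⟨Real.sqrt (n i), subset_adjoin ℚ _ ⟨i, rfl⟩⟩
  have hv : LinearIndependent ℚ v := by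
    refine linearIndependent_of_sq_mem_of_mul_not_mem (fun i => ⟨(n i : ℚ), Subtype.ext ?_⟩)
      (fun i h => ?_) (fun i j hij ⟨q, hq⟩ => ?_)
    · simp [v, hsq]
    · exact Real.sqrt_ne_zero'.2 (Nat.cast_pos.2 (hsf i).ne_zero.bot_lt) congr($h.1)
    · refine (irrational_sqrt_natCast_iff.2 <|
        Nat.not_isSquare_mul_of_squarefree (hsf i) (hsf j) (hinj.ne hij)) ⟨q, ?_⟩
      rw [Nat.cast_mul, Real.sqrt_mul (Nat.cast_nonneg _)]
      exact congr($hq.1)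
  exact hv.map' K.val.toLinearMap (LinearMap.ker_eq_bot_of_injective Subtype.val_injective)

theorem stmt_15 (m : ℕ) (n : Fin m → ℕ) (hinj : Function.Injective n)
    (hsf : ∀ i, Squarefree (n i)) (hpos : ∀ i, 0 < n i) :
    LinearIndependent ℚ (fun i : Fin m => Real.sqrt (n i)) :=
  stmt_15_general m n hinj hsf
end

section
/- Let n₁, …, n_{m−1} be distinct squarefree integers greater than 1, and let n_m be a prime not dividing any of n₁, …, n_{m−1}. Then for every ε > 0 there exist infinitely many k ∈ ℕ such that, setting α = k√(n_m), the fractional part {α√nᵢ} lies in (1 − ε, 1) for every i = 1, …, m−1. -/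
/-!
Put θᵢ = √r √nᵢ = √(r nᵢ). As r is a prime not dividing the squarefree nᵢ, the numbers 1 and r nᵢ
are distinct squarefree integers, so 1, θ₁, …, θₘ are linearly independent over ℚ. This is
Besicovitch's theorem, proved by adjoining square roots of primes one at a time: if the squarefree
m has a prime factor outside p₁, …, pₖ, then √m ∉ ℚ(√p₁, …, √pₖ).

Kronecker's theorem then puts (k θᵢ mod 1)ᵢ in the box (1 - ε, 1)ᵐ infinitely often. With
δ = ε / 2, the weight W(k) = ∏ᵢ cos²ⁿ(π (k θᵢ + δ)) is at most cos²ⁿ(π δ) whenever k misses the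
box. Expanding W(k) into exponentials e(k ∑ᵢ aᵢ θᵢ), linear independence leaves only the constant
term κ = (C(2n, n) / 4ⁿ)ᵐ with frequency zero, so ∑_{k < K} W(k) = κ K + O(1). Since κ decays only
polynomially in n, κ > cos²ⁿ(π δ) for large n, and the box must be hit infinitely often.
-/

open Real Finset FourierTransform

noncomputable def adjoinSqrts : List ℕ → Subalgebra ℚ ℝ
  | [] => ⊥
  | p :: l =>
    { carrier := {x | ∃ a ∈ adjoinSqrts l, ∃ b ∈ adjoinSqrts l, x = a + b * √p}
      add_mem' := by
        rintro _ _ ⟨a, ha, b, hb, rfl⟩ ⟨c, hc, d, hd, rfl⟩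
        exact ⟨a + c, add_mem ha hc, b + d, add_mem hb hd, by ring⟩
      mul_mem' := by
        rintro _ _ ⟨a, ha, b, hb, rfl⟩ ⟨c, hc, d, hd, rfl⟩
        refine ⟨a * c + p * (b * d), add_mem (mul_mem ha hc) (mul_mem (natCast_mem _ p)
          (mul_mem hb hd)), a * d + b * c, add_mem (mul_mem ha hd) (mul_mem hb hc), ?_⟩
        linear_combination (b * d) * Real.mul_self_sqrt (Nat.cast_nonneg p)
      algebraMap_mem' := fun q =>
        ⟨algebraMap ℚ ℝ q, Subalgebra.algebraMap_mem _ q, 0, zero_mem _, by ring⟩ }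

theorem mem_of_prime_dvd_of_not_dvd {p m : ℕ} {l : List ℕ}
    (hml : ∀ q, q.Prime → q ∣ m → q ∈ p :: l) (hpm : ¬p ∣ m) :
    ∀ q, q.Prime → q ∣ m → q ∈ l := fun q hq hqm =>
  (List.mem_cons.mp (hml q hq hqm)).resolve_left fun hqp => hpm (hqp ▸ hqm)

theorem mem_of_prime_dvd_div {p m : ℕ} {l : List ℕ} (hm : Squarefree m)
    (hml : ∀ q, q.Prime → q ∣ m → q ∈ p :: l) (hpm : p ∣ m) :
    ∀ q, q.Prime → q ∣ m / p → q ∈ l := by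
  intro q hq hqm
  refine (List.mem_cons.mp (hml q hq (hqm.trans (Nat.div_dvd_of_dvd hpm)))).resolve_left ?_
  rintro rfl
  refine hq.not_isUnit (hm q ?_)
  rw [← Nat.mul_div_cancel' hpm]
  exact mul_dvd_mul_left q hqm

theorem sqrt_div_mul_sqrt {p m : ℕ} (hpm : p ∣ m) : √(m / p : ℕ) * √p = √m := by
  rw [← Real.sqrt_mul (Nat.cast_nonneg _), ← Nat.cast_mul, Nat.div_mul_cancel hpm]

theorem not_isSquare_of_prime_dvd {m q : ℕ} (hm : Squarefree m) (hq : q.Prime) (hqm : q ∣ m) :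
    ¬IsSquare m := by
  rintro ⟨t, rfl⟩
  obtain rfl : t = 1 := Nat.isUnit_iff.mp (hm t dvd_rfl)
  exact hq.not_dvd_one hqm

namespace adjoinSqrts

theorem le_cons (p : ℕ) (l : List ℕ) : adjoinSqrts l ≤ adjoinSqrts (p :: l) :=
  fun x hx => ⟨x, hx, 0, zero_mem _, by ring⟩

theorem sqrt_mem {l : List ℕ} {m : ℕ} (hm : Squarefree m) (hml : ∀ q, q.Prime → q ∣ m → q ∈ l) :
    √m ∈ adjoinSqrts l := by
  induction l generalizing m with
  | nil =>
    obtain rfl : m = 1 := by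
      by_contra h
      obtain ⟨q, hq, hqm⟩ := Nat.exists_prime_and_dvd h
      exact List.not_mem_nil (hml q hq hqm)
    simp [one_mem]
  | cons p l ih =>
    by_cases hpm : p ∣ m
    · refine ⟨0, zero_mem _, √(m / p : ℕ), ?_, by rw [sqrt_div_mul_sqrt hpm, zero_add]⟩
      exact ih (hm.squarefree_of_dvd (Nat.div_dvd_of_dvd hpm)) (mem_of_prime_dvd_div hm hml hpm)
    · exact le_cons p l (ih hm (mem_of_prime_dvd_of_not_dvd hml hpm))

theorem sq_sub_mul_sq_ne_zero {p : ℕ} {l : List ℕ}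
    (hp : ∀ x ∈ adjoinSqrts l, ∀ y ∈ adjoinSqrts l, y ≠ 0 → √p * y ≠ x)
    {a b : ℝ} (ha : a ∈ adjoinSqrts l) (hb : b ∈ adjoinSqrts l) (hab : a + b * √p ≠ 0) :
    a ^ 2 - p * b ^ 2 ≠ 0 := by
  intro h
  have hb0 : b ≠ 0 := by
    rintro rfl
    exact hab (by simpa using h)
  have : (√p * b) ^ 2 = a ^ 2 := by
    rw [mul_pow, Real.sq_sqrt (Nat.cast_nonneg p)]; linarith
  rcases sq_eq_sq_iff_eq_or_eq_neg.mp this with h' | h'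
  · exact hp a ha b hb hb0 h'
  · exact hp (-a) (neg_mem ha) b hb hb0 h'

theorem sqrt_mul_ne_add_mul_sqrt {p : ℕ} {l : List ℕ} (hp : p.Prime) (hpl : p ∉ l)
    (hsqrt : ∀ {m q : ℕ}, Squarefree m → q.Prime → q ∣ m → q ∉ l →
      ∀ x ∈ adjoinSqrts l, ∀ y ∈ adjoinSqrts l, y ≠ 0 → √m * y ≠ x)
    {m q : ℕ} (hm : Squarefree m) (hq : q.Prime) (hqm : q ∣ m) (hqp : q ≠ p) (hql : q ∉ l)
    {D E F : ℝ} (hD : D ∈ adjoinSqrts l) (hE : E ∈ adjoinSqrts l) (hF : F ∈ adjoinSqrts l)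
    (hD0 : D ≠ 0) : √m * D ≠ E + F * √p := by
  intro h
  have hsp : √p * √p = p := Real.mul_self_sqrt (Nat.cast_nonneg p)
  by_cases hF0 : F = 0
  · exact hsqrt hm hq hqm hql E hE D hD hD0 (by simpa [hF0] using h)
  by_cases hE0 : E = 0
  · rw [hE0, zero_add] at h
    by_cases hpm : p ∣ m
    · have hqm' : q ∣ m / p := ((Nat.coprime_primes hq hp).mpr hqp).dvd_of_dvd_mul_right
        (by rwa [Nat.div_mul_cancel hpm])
      refine hsqrt (hm.squarefree_of_dvd (Nat.div_dvd_of_dvd hpm)) hq hqm' hql F hF D hD hD0 ?_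
      have hsp0 : √p ≠ 0 := Real.sqrt_ne_zero'.mpr (Nat.cast_pos.mpr hp.pos)
      rw [← sqrt_div_mul_sqrt hpm] at h
      exact mul_right_cancel₀ hsp0 (by linear_combination h)
    · have hmp : Squarefree (m * p) := Nat.squarefree_mul_iff.mpr
        ⟨(hp.coprime_iff_not_dvd.mpr hpm).symm, hm, hp.squarefree⟩
      refine hsqrt hmp hq (hqm.mul_right p) hql (F * p) (mul_mem hF (natCast_mem _ p)) D hD hD0 ?_
      rw [Nat.cast_mul, Real.sqrt_mul (Nat.cast_nonneg m)]
      linear_combination √p * h + F * hsp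
  · -- squaring isolates `√p`, whose coefficient `2EF` is nonzero
    refine hsqrt hp.squarefree hp dvd_rfl hpl (m * D ^ 2 - E ^ 2 - p * F ^ 2) ?_ (2 * E * F) ?_
      (by simp [hE0, hF0]) ?_
    · exact sub_mem (sub_mem (mul_mem (natCast_mem _ m) (pow_mem hD 2)) (pow_mem hE 2))
        (mul_mem (natCast_mem _ p) (pow_mem hF 2))
    · exact mul_mem (mul_mem (ofNat_mem _ 2) hE) hF
    · linear_combination -(√m * D + E + F * √p) * h + D ^ 2 * Real.mul_self_sqrt (Nat.cast_nonneg m)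
        - F ^ 2 * hsp

/-- `√m * y ≠ x` for all `y ≠ 0` says `√m ∉ Frac (adjoinSqrts l)` without dividing. -/
theorem sqrt_mul_ne {l : List ℕ} (hl : l.Nodup) (hlp : ∀ p ∈ l, p.Prime) {m q : ℕ}
    (hm : Squarefree m) (hq : q.Prime) (hqm : q ∣ m) (hql : q ∉ l) :
    ∀ x ∈ adjoinSqrts l, ∀ y ∈ adjoinSqrts l, y ≠ 0 → √m * y ≠ x := by
  induction l generalizing m q with
  | nil =>
    rintro _ ⟨a, rfl⟩ _ ⟨b, rfl⟩ hb h
    have hirr : Irrational √m :=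
      irrational_sqrt_natCast_iff.mpr (not_isSquare_of_prime_dvd hm hq hqm)
    exact (hirr.mul_ratCast (q := b) (by simpa using hb)).ne_rat a (by simpa using h)
  | cons p l ih =>
    rintro _ ⟨x₀, hx₀, x₁, hx₁, rfl⟩ _ ⟨y₀, hy₀, y₁, hy₁, rfl⟩ hy h
    obtain ⟨hpl, hl⟩ := List.nodup_cons.mp hl
    have hp := hlp p List.mem_cons_self
    have ih := @ih hl fun r hr => hlp r (List.mem_cons_of_mem p hr)
    -- multiply by the conjugate `y₀ - y₁ √p` to move the coefficient of `√m` into `adjoinSqrts l`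
    refine sqrt_mul_ne_add_mul_sqrt hp hpl ih hm hq hqm ?_ ?_ (D := y₀ ^ 2 - p * y₁ ^ 2)
      (E := x₀ * y₀ - p * x₁ * y₁) (F := x₁ * y₀ - x₀ * y₁) ?_ ?_ ?_
      (sq_sub_mul_sq_ne_zero (ih hp.squarefree hp dvd_rfl hpl) hy₀ hy₁ hy) ?_
    · exact fun h => hql (h ▸ List.mem_cons_self)
    · exact fun h => hql (List.mem_cons_of_mem p h)
    · exact sub_mem (pow_mem hy₀ 2) (mul_mem (natCast_mem _ p) (pow_mem hy₁ 2))
    · exact sub_mem (mul_mem hx₀ hy₀) (mul_mem (mul_mem (natCast_mem _ p) hx₁) hy₁)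
    · exact sub_mem (mul_mem hx₁ hy₀) (mul_mem hx₀ hy₁)
    · linear_combination (y₀ - y₁ * √p) * h
        + (√m * y₁ ^ 2 - x₁ * y₁) * Real.mul_self_sqrt (Nat.cast_nonneg p)

theorem eq_zero_of_add_mul_sqrt_eq_zero {l : List ℕ} (hl : l.Nodup) (hlp : ∀ p ∈ l, p.Prime)
    {p : ℕ} (hp : p.Prime) (hpl : p ∉ l) {a b : ℝ} (ha : a ∈ adjoinSqrts l)
    (hb : b ∈ adjoinSqrts l) (h : a + b * √p = 0) : a = 0 ∧ b = 0 := by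
  have hb0 : b = 0 := by
    by_contra hb0
    exact sqrt_mul_ne hl hlp hp.squarefree hp dvd_rfl hpl (-a) (neg_mem ha) b hb hb0
      (by linear_combination h)
  exact ⟨by simpa [hb0] using h, hb0⟩

end adjoinSqrts

theorem Set.InjOn.div_of_dvd {ι : Type*} {S : Finset ι} {N : ι → ℕ} (hN : Set.InjOn N S)
    (p : ℕ) : Set.InjOn (fun i => N i / p) ↑(S.filter fun i => p ∣ N i) := by
  intro a ha b hb hab
  obtain ⟨haS, hpa⟩ := mem_filter.mp ha
  obtain ⟨hbS, hpb⟩ := mem_filter.mp hb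
  refine hN haS hbS ?_
  rw [← Nat.div_mul_cancel hpa, ← Nat.div_mul_cancel hpb]
  exact congrArg (· * p) hab

theorem sum_mul_sqrt_eq_add_mul_sqrt {ι : Type*} (S : Finset ι) (N : ι → ℕ) (c : ι → ℝ)
    (p : ℕ) : ∑ i ∈ S, c i * √(N i) = ∑ i ∈ S with ¬p ∣ N i, c i * √(N i) +
      (∑ i ∈ S with p ∣ N i, c i * √(N i / p : ℕ)) * √p := by
  rw [← sum_filter_not_add_sum_filter S (fun i => p ∣ N i), sum_mul]
  congr 1
  exact sum_congr rfl fun i hi => by rw [mul_assoc, sqrt_div_mul_sqrt (mem_filter.mp hi).2]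

theorem eq_zero_of_sum_mul_sqrt_eq_zero {ι : Type*} {l : List ℕ} (hl : l.Nodup)
    (hlp : ∀ p ∈ l, p.Prime) {S : Finset ι} {N : ι → ℕ} (hN : Set.InjOn N S)
    (hS : ∀ i ∈ S, Squarefree (N i) ∧ ∀ q, q.Prime → q ∣ N i → q ∈ l) {c : ι → ℚ}
    (h : ∑ i ∈ S, (c i : ℝ) * √(N i) = 0) : ∀ i ∈ S, c i = 0 := by
  classical
  induction l generalizing S N c with
  | nil =>
    have hN1 : ∀ i ∈ S, N i = 1 := fun i hi => by
      by_contra h1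
      obtain ⟨q, hq, hqN⟩ := Nat.exists_prime_and_dvd h1
      exact List.not_mem_nil ((hS i hi).2 q hq hqN)
    intro i hi
    have hSi : S = {i} := eq_singleton_iff_unique_mem.mpr
      ⟨hi, fun j hj => hN hj hi ((hN1 j hj).trans (hN1 i hi).symm)⟩
    simpa [hSi, hN1 i hi] using h
  | cons p l ih =>
    obtain ⟨hpl, hl⟩ := List.nodup_cons.mp hl
    have hp := hlp p List.mem_cons_self
    have hlp' : ∀ r ∈ l, r.Prime := fun r hr => hlp r (List.mem_cons_of_mem p hr)
    have ih := @ih hl hlp'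
    set S₁ := S.filter (fun i => ¬p ∣ N i)
    set S₂ := S.filter (fun i => p ∣ N i)
    have hS₁ : ∀ i ∈ S₁, Squarefree (N i) ∧ ∀ q, q.Prime → q ∣ N i → q ∈ l := fun i hi =>
      have hi := mem_filter.mp hi
      ⟨(hS i hi.1).1, mem_of_prime_dvd_of_not_dvd (hS i hi.1).2 hi.2⟩
    have hS₂ : ∀ i ∈ S₂, Squarefree (N i / p) ∧ ∀ q, q.Prime → q ∣ N i / p → q ∈ l := fun i hi =>
      have hi := mem_filter.mp hi
      ⟨(hS i hi.1).1.squarefree_of_dvd (Nat.div_dvd_of_dvd hi.2),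
        mem_of_prime_dvd_div (hS i hi.1).1 (hS i hi.1).2 hi.2⟩
    have hc : ∀ i, ((c i : ℚ) : ℝ) ∈ adjoinSqrts l := fun i => by
      simpa using Subalgebra.algebraMap_mem (adjoinSqrts l) (c i)
    have hA : ∑ i ∈ S₁, (c i : ℝ) * √(N i) ∈ adjoinSqrts l := Subalgebra.sum_mem _ fun i hi =>
      mul_mem (hc i) (adjoinSqrts.sqrt_mem (hS₁ i hi).1 (hS₁ i hi).2)
    have hB : ∑ i ∈ S₂, (c i : ℝ) * √(N i / p : ℕ) ∈ adjoinSqrts l :=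
      Subalgebra.sum_mem _ fun i hi =>
        mul_mem (hc i) (adjoinSqrts.sqrt_mem (hS₂ i hi).1 (hS₂ i hi).2)
    have hAB := (sum_mul_sqrt_eq_add_mul_sqrt S N (fun i => (c i : ℝ)) p).symm.trans h
    obtain ⟨hA0, hB0⟩ := adjoinSqrts.eq_zero_of_add_mul_sqrt_eq_zero hl hlp' hp hpl hA hB hAB
    intro i hi
    by_cases hpi : p ∣ N i
    · exact ih (hN.div_of_dvd p) hS₂ hB0 i (mem_filter.mpr ⟨hi, hpi⟩)
    · exact ih (hN.mono (filter_subset _ S)) hS₁ hA0 i (mem_filter.mpr ⟨hi, hpi⟩)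

theorem linearIndependent_sqrt_of_squarefree {ι : Type*} {N : ι → ℕ} (hN : Function.Injective N)
    (hsf : ∀ i, Squarefree (N i)) : LinearIndependent ℚ (fun i => √(N i : ℝ)) := by
  classical
  refine linearIndependent_iff'.mpr fun S c h => ?_
  set l := (S.biUnion fun i => (N i).primeFactors).toList
  refine eq_zero_of_sum_mul_sqrt_eq_zero (l := l) (nodup_toList _) (fun p hp => ?_)
    hN.injOn (fun i hi => ⟨hsf i, fun q hq hqN => ?_⟩) (by simpa [Rat.smul_def] using h)
  · obtain ⟨i, -, hpi⟩ := mem_biUnion.mp (mem_toList.mp hp)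
    exact Nat.prime_of_mem_primeFactors hpi
  · exact mem_toList.mpr (mem_biUnion.mpr
      ⟨i, hi, Nat.mem_primeFactors.mpr ⟨hq, hqN, (hsf i).ne_zero⟩⟩)

theorem coe_fourierChar_sum {ι : Type*} (s : Finset ι) (f : ι → ℝ) :
    (𝐞 (∑ i ∈ s, f i) : ℂ) = ∏ i ∈ s, (𝐞 (f i) : ℂ) := by
  induction s using Finset.cons_induction with
  | empty => simp
  | cons a s ha ih => rw [sum_cons, AddChar.map_add_eq_mul, Circle.coe_mul, ih, prod_cons]

theorem fourierChar_eq_one_iff {x : ℝ} : 𝐞 x = 1 ↔ ∃ z : ℤ, x = z := by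
  rw [fourierChar_apply', Circle.exp_eq_one]
  refine exists_congr fun z => ?_
  constructor
  · intro h; nlinarith [pi_pos]
  · intro h; rw [h]; ring

theorem cos_pi_mul_pow_eq_sum (n : ℕ) (y : ℝ) :
    ((cos (π * y) ^ (2 * n) : ℝ) : ℂ) =
      ∑ j ∈ range (2 * n + 1), ((2 * n).choose j / 4 ^ n : ℂ) * 𝐞 ((j - n : ℝ) * y) := by
  have hcos : (cos (π * y) : ℂ) = (𝐞 (y / 2) + 𝐞 (-(y / 2))) / 2 := by
    rw [Complex.ofReal_cos, Complex.cos, fourierChar_apply, fourierChar_apply]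
    congr 3 <;> push_cast <;> ring
  rw [Complex.ofReal_pow, hcos, div_pow, add_pow, sum_div]
  refine sum_congr rfl fun j hj => ?_
  have hj : j ≤ 2 * n := Nat.lt_succ_iff.mp (mem_range.mp hj)
  have he : 𝐞 (y / 2) ^ j * 𝐞 (-(y / 2)) ^ (2 * n - j) = 𝐞 ((j - n : ℝ) * y) := by
    rw [← AddChar.map_nsmul_eq_pow, ← AddChar.map_nsmul_eq_pow, ← AddChar.map_add_eq_mul,
      nsmul_eq_mul, nsmul_eq_mul, Nat.cast_sub hj]
    congr 1
    push_cast
    ring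
  rw [← Circle.coe_pow, ← Circle.coe_pow, ← Circle.coe_mul, he, pow_mul]
  norm_num
  ring

theorem prod_cos_pi_mul_pow_eq_sum {ι : Type*} [Fintype ι] [DecidableEq ι] (n : ℕ) (y : ι → ℝ) :
    ((∏ i, cos (π * y i) ^ (2 * n) : ℝ) : ℂ) =
      ∑ j ∈ Fintype.piFinset fun _ => range (2 * n + 1),
        (∏ i, ((2 * n).choose (j i) / 4 ^ n : ℂ)) * 𝐞 (∑ i, (j i - n : ℝ) * y i) := by
  simp_rw [Complex.ofReal_prod, cos_pi_mul_pow_eq_sum, prod_univ_sum, coe_fourierChar_sum,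
    prod_mul_distrib]

theorem norm_geom_sum_le {z : ℂ} (hz1 : ‖z‖ ≤ 1) (hz : z ≠ 1) (K : ℕ) :
    ‖∑ k ∈ range K, z ^ k‖ ≤ 2 / ‖z - 1‖ := by
  rw [geom_sum_eq hz, norm_div]
  gcongr
  calc ‖z ^ K - 1‖ ≤ ‖z‖ ^ K + ‖(1 : ℂ)‖ := by rw [← norm_pow]; exact norm_sub_le _ _
    _ ≤ 2 := by rw [norm_one]; linarith [pow_le_one₀ (norm_nonneg z) hz1 (n := K)]

theorem exists_norm_sum_range_sum_pow_sub_le {ι : Type*} (J : Finset ι) (γ ζ : ι → ℂ)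
    (hζ : ∀ j ∈ J, ‖ζ j‖ ≤ 1) :
    ∃ B, ∀ K : ℕ, ‖∑ k ∈ range K, ∑ j ∈ J, γ j * ζ j ^ k - K * ∑ j ∈ J with ζ j = 1, γ j‖ ≤ B := by
  classical
  refine ⟨∑ j ∈ J with ζ j ≠ 1, ‖γ j‖ * (2 / ‖ζ j - 1‖), fun K => ?_⟩
  have hsplit : ∑ k ∈ range K, ∑ j ∈ J, γ j * ζ j ^ k - K * ∑ j ∈ J with ζ j = 1, γ j =
      ∑ j ∈ J with ζ j ≠ 1, γ j * ∑ k ∈ range K, ζ j ^ k := by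
    have hmean : ∑ j ∈ J with ζ j = 1, γ j * ∑ k ∈ range K, ζ j ^ k =
        K * ∑ j ∈ J with ζ j = 1, γ j := by
      rw [mul_sum]
      exact sum_congr rfl fun j hj => by simp [(mem_filter.mp hj).2, mul_comm]
    simp_rw [sum_comm (s := range K), ← mul_sum]
    rw [← sum_filter_add_sum_filter_not J (fun j => ζ j = 1), hmean, add_sub_cancel_left]
  rw [hsplit]
  refine (norm_sum_le _ _).trans (sum_le_sum fun j hj => ?_)
  obtain ⟨hjJ, hj1⟩ := mem_filter.mp hj
  rw [norm_mul]
  exact mul_le_mul_of_nonneg_left (norm_geom_sum_le (hζ j hjJ) hj1 K) (norm_nonneg _)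

theorem infinite_of_abs_sum_range_sub_le {W : ℕ → ℝ} {S : Set ℕ} {a κ B : ℝ} (ha : 0 ≤ a)
    (haκ : a < κ) (hWS : ∀ k ∉ S, W k ≤ a)
    (hB : ∀ K : ℕ, |∑ k ∈ range K, W k - κ * K| ≤ B) : S.Infinite := by
  intro hfin
  obtain ⟨N, hN⟩ := hfin.bddAbove
  set C := ∑ k ∈ range (N + 1), |W k|
  have hsum : ∀ K, N + 1 ≤ K → ∑ k ∈ range K, W k ≤ C + a * K := by
    intro K hK
    rw [← sum_range_add_sum_Ico _ hK]
    have hhead : ∑ k ∈ range (N + 1), W k ≤ C := sum_le_sum fun k _ => le_abs_self _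
    have htail : ∑ k ∈ Ico (N + 1) K, W k ≤ ∑ _k ∈ Ico (N + 1) K, a :=
      sum_le_sum fun k hk => hWS k fun hkS => by linarith [hN hkS, (mem_Ico.mp hk).1]
    have hcard : ((K - (N + 1) : ℕ) : ℝ) ≤ K := by exact_mod_cast Nat.sub_le _ _
    rw [sum_const, Nat.card_Ico, nsmul_eq_mul] at htail
    nlinarith
  obtain ⟨K, hK⟩ := exists_nat_gt ((B + C) / (κ - a))
  set M := max K (N + 1)
  have hM : (B + C) / (κ - a) < M := hK.trans_le (by exact_mod_cast le_max_left K (N + 1))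
  rw [div_lt_iff₀ (sub_pos.mpr haκ)] at hM
  linarith [(abs_le.mp (hB M)).1, hsum M (le_max_right K (N + 1))]

theorem cos_sq_pi_mul_le_of_mem_Icc {δ t : ℝ} (hδ : 0 ≤ δ) (ht : t ∈ Set.Icc δ (1 - δ)) :
    cos (π * t) ^ 2 ≤ cos (π * δ) ^ 2 := by
  wlog h : t ≤ 1 / 2 generalizing t
  · have := this (t := 1 - t) ⟨by linarith [ht.2], by linarith [ht.1]⟩ (by linarith)
    rwa [mul_sub, mul_one, cos_pi_sub, neg_sq] at this
  have hπ := pi_pos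
  have hle : cos (π * t) ≤ cos (π * δ) :=
    cos_le_cos_of_nonneg_of_le_pi (by positivity) (by nlinarith) (by nlinarith [ht.1])
  have hnonneg : 0 ≤ cos (π * t) := cos_nonneg_of_mem_Icc ⟨by nlinarith [ht.1], by nlinarith⟩
  exact pow_le_pow_left₀ hnonneg hle 2

theorem cos_sq_pi_mul_add_le {δ x : ℝ} (hδ : 0 ≤ δ) (hx : Int.fract x ≤ 1 - 2 * δ) :
    cos (π * (x + δ)) ^ 2 ≤ cos (π * δ) ^ 2 := by
  have hper : Function.Periodic (fun y => cos (π * y) ^ 2) 1 := fun y => by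
    simp [mul_add, cos_add_pi]
  rw [← hper.sub_int_mul_eq (n := ⌊x⌋), mul_one, add_sub_right_comm, ← Int.fract]
  exact cos_sq_pi_mul_le_of_mem_Icc hδ ⟨by linarith [Int.fract_nonneg x], by linarith⟩

theorem prod_cos_pow_le {ι : Type*} [Fintype ι] {δ : ℝ} (hδ : 0 ≤ δ) (n : ℕ) {x : ι → ℝ}
    (hx : ∃ i, Int.fract (x i) ≤ 1 - 2 * δ) :
    ∏ i, cos (π * (x i + δ)) ^ (2 * n) ≤ (cos (π * δ) ^ 2) ^ n := by
  classical
  obtain ⟨i, hi⟩ := hx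
  simp_rw [pow_mul]
  rw [← mul_prod_erase univ _ (mem_univ i)]
  have hrest : ∏ j ∈ univ.erase i, (cos (π * (x j + δ)) ^ 2) ^ n ≤ 1 :=
    prod_le_one (fun _ _ => by positivity) fun _ _ => pow_le_one₀ (sq_nonneg _) (cos_sq_le_one _)
  exact (mul_le_of_le_one_right (by positivity) hrest).trans
    (pow_le_pow_left₀ (sq_nonneg _) (cos_sq_pi_mul_add_le hδ hi) n)

theorem exists_pow_lt_centralBinom_div_pow (d : ℕ) {ρ : ℝ} (hρ0 : 0 ≤ ρ) (hρ1 : ρ < 1) :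
    ∃ n : ℕ, ρ ^ n < ((2 * n).choose n / 4 ^ n : ℝ) ^ d := by
  have hlim := (tendsto_pow_const_mul_const_pow_of_abs_lt_one d
    (by rwa [abs_of_nonneg hρ0])).const_mul ((3 : ℝ) ^ d)
  rw [mul_zero] at hlim
  obtain ⟨n, hn, hn1⟩ := ((hlim.eventually_lt_const one_pos).and
    (Filter.eventually_ge_atTop 1)).exists
  refine ⟨n, ?_⟩
  have hn1' : (1 : ℝ) ≤ n := by exact_mod_cast hn1
  have hchoose : (1 / (2 * n + 1) : ℝ) ≤ (2 * n).choose n / 4 ^ n := by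
    rw [div_le_div_iff₀ (by positivity) (by positivity), one_mul, mul_comm]
    exact_mod_cast Nat.four_pow_le_two_mul_add_one_mul_central_binom n
  calc ρ ^ n < (1 / (2 * n + 1)) ^ d := by
        rw [div_pow, one_pow, lt_div_iff₀ (by positivity)]
        calc ρ ^ n * (2 * n + 1) ^ d ≤ 3 ^ d * (n ^ d * ρ ^ n) := by
              rw [← mul_assoc, ← mul_pow, mul_comm]
              gcongr
              linarith
          _ < 1 := hn
    _ ≤ _ := pow_le_pow_left₀ (by positivity) hchoose d

theorem eq_zero_of_sum_intCast_mul_eq_intCast {ι : Type*} [Fintype ι] {θ : ι → ℝ}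
    (hθ : LinearIndependent ℚ fun o : Option ι => o.elim 1 θ) {a : ι → ℤ} {z : ℤ}
    (h : ∑ i, (a i : ℝ) * θ i = z) : a = 0 := by
  have := Fintype.linearIndependent_iff.mp hθ (fun o => o.elim (-z : ℚ) fun i => (a i : ℚ))
    (by simp [Fintype.sum_option, Rat.smul_def, h])
  exact funext fun i => by simpa using this (some i)

theorem fourierChar_sum_sub_mul_eq_one_iff {ι : Type*} [Fintype ι] {θ : ι → ℝ}
    (hθ : LinearIndependent ℚ fun o : Option ι => o.elim 1 θ) {n : ℕ} {j : ι → ℕ} :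
    𝐞 (∑ i, (j i - n : ℝ) * θ i) = 1 ↔ j = fun _ => n := by
  refine ⟨fun h => ?_, fun h => by simp [h]⟩
  obtain ⟨z, hz⟩ := fourierChar_eq_one_iff.mp h
  have ha := eq_zero_of_sum_intCast_mul_eq_intCast hθ (a := fun i => (j i : ℤ) - n) (z := z)
    (by push_cast; exact hz)
  funext i
  have := congrFun ha i
  simp only [Pi.zero_apply, sub_eq_zero] at this
  exact_mod_cast this

theorem exists_abs_sum_range_prod_cos_pow_sub_le {ι : Type*} [Fintype ι] [DecidableEq ι]
    {θ : ι → ℝ} (hθ : LinearIndependent ℚ fun o : Option ι => o.elim 1 θ) (δ : ℝ) (n : ℕ) :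
    ∃ B, ∀ K : ℕ, |∑ k ∈ range K, ∏ i, cos (π * (k * θ i + δ)) ^ (2 * n) -
      ((2 * n).choose n / 4 ^ n : ℝ) ^ Fintype.card ι * K| ≤ B := by
  set J := Fintype.piFinset fun _ : ι => range (2 * n + 1)
  set γ : (ι → ℕ) → ℂ := fun j =>
    (∏ i, ((2 * n).choose (j i) / 4 ^ n : ℂ)) * 𝐞 (∑ i, (j i - n : ℝ) * δ)
  set ζ : (ι → ℕ) → ℂ := fun j => 𝐞 (∑ i, (j i - n : ℝ) * θ i)
  have hexp : ∀ k : ℕ, ((∏ i, cos (π * (k * θ i + δ)) ^ (2 * n) : ℝ) : ℂ) =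
      ∑ j ∈ J, γ j * ζ j ^ k := fun k => by
    rw [prod_cos_pi_mul_pow_eq_sum]
    refine sum_congr rfl fun j _ => ?_
    rw [mul_assoc, ← Circle.coe_pow, ← AddChar.map_nsmul_eq_pow, ← Circle.coe_mul,
      ← AddChar.map_add_eq_mul, nsmul_eq_mul, mul_sum, ← sum_add_distrib]
    congr 4 with i
    ring
  have hres : {j ∈ J | ζ j = 1} = {fun _ => n} := by
    ext j
    rw [mem_filter, mem_singleton, Circle.coe_eq_one, fourierChar_sum_sub_mul_eq_one_iff hθ]
    refine ⟨And.right, fun hj => ⟨?_, hj⟩⟩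
    exact hj ▸ Fintype.mem_piFinset.mpr fun _ => mem_range.mpr (by omega)
  have hmean : ∑ j ∈ J with ζ j = 1, γ j = ((2 * n).choose n / 4 ^ n : ℝ) ^ Fintype.card ι := by
    simp [hres, γ, div_pow]
  obtain ⟨B, hB⟩ := exists_norm_sum_range_sum_pow_sub_le J γ ζ fun j _ => (Circle.norm_coe _).le
  refine ⟨B, fun K => ?_⟩
  rw [← Real.norm_eq_abs, ← Complex.norm_real]
  convert hB K using 2
  rw [hmean, Complex.ofReal_sub, Complex.ofReal_sum, Complex.ofReal_mul, mul_comm (K : ℂ)]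
  simp_rw [hexp]
  norm_cast

theorem infinite_setOf_forall_fract_mul_mem_Ioo {ι : Type*} [Fintype ι] {θ : ι → ℝ}
    (hθ : LinearIndependent ℚ fun o : Option ι => o.elim 1 θ) {ε : ℝ} (hε : 0 < ε) :
    {k : ℕ | ∀ i, Int.fract (k * θ i) ∈ Set.Ioo (1 - ε) 1}.Infinite := by
  classical
  wlog hε1 : ε ≤ 1 generalizing ε
  · refine Set.Infinite.mono (fun k hk i => ?_) (this (lt_min hε one_pos) (min_le_right ε 1))
    exact Set.Ioo_subset_Ioo_left (by linarith [min_le_left ε 1]) (hk i)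
  set δ := ε / 2 with hδ
  have hρ : cos (π * δ) ^ 2 < 1 := by
    have : 0 < sin (π * δ) := sin_pos_of_pos_of_lt_pi (by positivity) (by nlinarith [pi_pos, hδ])
    nlinarith [cos_sq' (π * δ)]
  obtain ⟨n, hn⟩ := exists_pow_lt_centralBinom_div_pow (Fintype.card ι) (sq_nonneg _) hρ
  obtain ⟨B, hB⟩ := exists_abs_sum_range_prod_cos_pow_sub_le hθ δ n
  refine infinite_of_abs_sum_range_sub_le (by positivity) hn (fun k hk => ?_) hB
  refine prod_cos_pow_le (by positivity) n ?_
  obtain ⟨i, hi⟩ := not_forall.mp hk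
  exact ⟨i, not_lt.mp fun h => hi ⟨by linarith [hδ], Int.fract_lt_one _⟩⟩

theorem stmt_16_general (m : ℕ) (n : Fin m → ℕ) (hinj : Function.Injective n)
    (hsf : ∀ i, Squarefree (n i))
    (r : ℕ) (hr : r.Prime) (hnd : ∀ i, ¬ r ∣ n i) (ε : ℝ) (hε : 0 < ε) :
    {k : ℕ | ∀ i, Int.fract ((k : ℝ) * Real.sqrt r * Real.sqrt (n i)) ∈
      Set.Ioo (1 - ε) 1}.Infinite := by
  set N : Option (Fin m) → ℕ := fun o => o.elim 1 fun i => r * n i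
  have hN : Function.Injective N := by
    rintro (_ | i) (_ | j) h
    · rfl
    · exact absurd (Nat.eq_one_of_mul_eq_one_right h.symm) hr.ne_one
    · exact absurd (Nat.eq_one_of_mul_eq_one_right h) hr.ne_one
    · exact congrArg some (hinj (Nat.eq_of_mul_eq_mul_left hr.pos h))
  have hNsf : ∀ o, Squarefree (N o)
    | none => squarefree_one
    | some i => Nat.squarefree_mul_iff.mpr
        ⟨hr.coprime_iff_not_dvd.mpr (hnd i), hr.squarefree, hsf i⟩
  have hθ : LinearIndependent ℚ fun o : Option (Fin m) => o.elim 1 fun i => √r * √(n i) := by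
    convert linearIndependent_sqrt_of_squarefree hN hNsf using 2 with o
    cases o <;> simp [N, Real.sqrt_mul]
  simpa only [mul_assoc] using infinite_setOf_forall_fract_mul_mem_Ioo hθ hε

theorem stmt_16 (m : ℕ) (n : Fin m → ℕ) (hinj : Function.Injective n)
    (hsf : ∀ i, Squarefree (n i)) (hgt : ∀ i, 1 < n i)
    (r : ℕ) (hr : r.Prime) (hnd : ∀ i, ¬ r ∣ n i) (ε : ℝ) (hε : 0 < ε) :
    {k : ℕ | ∀ i, Int.fract ((k : ℝ) * Real.sqrt r * Real.sqrt (n i)) ∈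
      Set.Ioo (1 - ε) 1}.Infinite :=
  stmt_16_general m n hinj hsf r hr hnd ε hε
end

section
/- If v = (v₁, …, vₘ) ∈ ℝᵐ is such that 1, v₁, …, vₘ are linearly independent over ℚ, then the sequence ({kv₁}, …, {kvₘ}) for k ∈ ℕ is dense in [0,1]ᵐ. -/
/-!
A closed proper subgroup `H` of a finite-dimensional real vector space carries a nonzero linear
functional with integer values on `H`. Indeed, let `V` be the largest subspace contained in `H`
and `W` a complement of `V`. The group `H ∩ W` contains no line, so it is discrete (a sequence
of small nonzero elements of `H ∩ W` would accumulate in some direction, and the whole line in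
that direction would then lie in `H ∩ W`). Hence `H ∩ W` is either a lattice in `W`, and a
coordinate functional of a lattice basis works, or it spans a proper subspace of `W`, and a
functional vanishing on that subspace works. In both cases the functional is composed with the
projection onto `W` along `V`.

Now take the closure of `ℤ v + ℤᵐ` in `ℝᵐ`. A functional `f` with integer values on it satisfies
`∑ f(eᵢ) vᵢ = f(v) ∈ ℤ` with every `f(eᵢ) ∈ ℤ`. Since `1, v₁, …, vₘ` are independent over `ℚ`,
this forces `f = 0`, so `ℤ v + ℤᵐ` is dense. Equivalently, the integer multiples of `v` are dense
in the torus `ℝᵐ / ℤᵐ`, and in a compact group the natural multiples have the same closure.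
-/

open Set Filter Topology

variable {E : Type*} [NormedAddCommGroup E] [NormedSpace ℝ E]

namespace AddSubgroup

def lineality (H : AddSubgroup E) : Submodule ℝ E where
  carrier := {x | ∀ t : ℝ, t • x ∈ H}
  add_mem' {x y} hx hy t := by simpa only [smul_add] using H.add_mem (hx t) (hy t)
  zero_mem' t := by simpa only [smul_zero] using H.zero_mem
  smul_mem' c x hx t := by simpa only [smul_smul] using hx (t * c)

theorem mem_lineality {H : AddSubgroup E} {x : E} : x ∈ H.lineality ↔ ∀ t : ℝ, t • x ∈ H :=
  Iff.rfl

theorem lineality_subset (H : AddSubgroup E) : (H.lineality : Set E) ⊆ H := fun x hx => by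
  simpa using hx 1

theorem smul_mem_of_tendsto_inv_smul {H : AddSubgroup E} (hH : IsClosed (H : Set E))
    {x : ℕ → E} {r : ℕ → ℝ} {w : E} (hx : ∀ n, x n ∈ H) (hr : ∀ n, 0 < r n)
    (hr0 : Tendsto r atTop (𝓝 0)) (hw : Tendsto (fun n => (r n)⁻¹ • x n) atTop (𝓝 w)) (t : ℝ) :
    t • w ∈ H := by
  -- `t • w` is the limit of the elements `⌊t / r n⌋ • x n` of `H`.
  have hscalar : Tendsto (fun n => (⌊t / r n⌋ : ℝ) * r n) atTop (𝓝 t) := by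
    rw [tendsto_iff_norm_sub_tendsto_zero]
    refine squeeze_zero (fun n => norm_nonneg _) (fun n => ?_) hr0
    rw [Real.norm_eq_abs, abs_sub_comm, abs_of_nonneg (Int.sub_floor_div_mul_nonneg t (hr n))]
    exact (Int.sub_floor_div_mul_lt t (hr n)).le
  have hmul : ∀ n, ⌊t / r n⌋ • x n = ((⌊t / r n⌋ : ℝ) * r n) • ((r n)⁻¹ • x n) := fun n => by
    rw [smul_smul, mul_assoc, mul_inv_cancel₀ (hr n).ne', mul_one, Int.cast_smul_eq_zsmul]
  refine hH.mem_of_tendsto (hscalar.smul hw) (Eventually.of_forall fun n => ?_)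
  rw [← hmul]
  exact H.zsmul_mem (hx n) _

theorem discreteTopology_of_isClosed_of_lineality_eq_bot [ProperSpace E] {H : AddSubgroup E}
    (hH : IsClosed (H : Set E)) (hlin : H.lineality = ⊥) : DiscreteTopology H := by
  rw [discreteTopology_iff_isOpen_singleton_zero, Metric.isOpen_singleton_iff]
  by_contra! hsmall
  have hseq : ∀ n : ℕ, ∃ x ∈ H, x ≠ 0 ∧ ‖x‖ < 1 / (n + 1) := fun n => by
    obtain ⟨⟨x, hxH⟩, hx, hx0⟩ := hsmall (1 / (n + 1)) (by positivity)
    exact ⟨x, hxH, fun h => hx0 (Subtype.ext h), by simpa using hx⟩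
  choose x hxH hx0 hxn using hseq
  have hsphere : ∀ n, ‖x n‖⁻¹ • x n ∈ Metric.sphere (0 : E) 1 := fun n => by
    simp [norm_smul, hx0 n]
  obtain ⟨w, hw, φ, hφ, hconv⟩ := (isCompact_sphere (0 : E) 1).tendsto_subseq hsphere
  have hnorm : Tendsto (fun n => ‖x n‖) atTop (𝓝 0) :=
    squeeze_zero (fun n => norm_nonneg _) (fun n => (hxn n).le)
      tendsto_one_div_add_atTop_nhds_zero_nat
  have hwlin : w ∈ H.lineality := mem_lineality.2 <|
    smul_mem_of_tendsto_inv_smul hH (fun n => hxH (φ n)) (fun n => norm_pos_iff.2 (hx0 (φ n)))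
      (hnorm.comp hφ.tendsto_atTop) hconv
  rw [hlin, Submodule.mem_bot] at hwlin
  simp [hwlin] at hw

end AddSubgroup

theorem Submodule.exists_dual_ne_zero_intValued_of_discreteTopology [FiniteDimensional ℝ E]
    [Nontrivial E] (L : Submodule ℤ E) [DiscreteTopology L] :
    ∃ f : E →ₗ[ℝ] ℝ, f ≠ 0 ∧ ∀ x ∈ L, ∃ n : ℤ, f x = n := by
  by_cases hspan : span ℝ (L : Set E) = ⊤
  · have : IsZLattice ℝ L := ⟨hspan⟩
    let bℤ := Module.Free.chooseBasis ℤ L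
    let b := bℤ.ofZLatticeBasis ℝ L
    obtain ⟨i⟩ := b.index_nonempty
    refine ⟨b.coord i, fun h => by simpa using LinearMap.congr_fun h (b i), fun x hx => ?_⟩
    exact ⟨bℤ.repr ⟨x, hx⟩ i, bℤ.ofZLatticeBasis_repr_apply ℝ L ⟨x, hx⟩ i⟩
  · obtain ⟨f, hf0, hf⟩ :=
      exists_dual_map_eq_bot_of_lt_top (lt_top_iff_ne_top.2 hspan) inferInstance
    refine ⟨f, hf0, fun x hx => ⟨0, ?_⟩⟩
    have : f x ∈ (span ℝ (L : Set E)).map f := ⟨x, subset_span hx, rfl⟩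
    simpa [hf] using this

theorem AddSubgroup.exists_dual_ne_zero_intValued_of_isClosed [FiniteDimensional ℝ E]
    {H : AddSubgroup E} (hH : IsClosed (H : Set E)) (hne : H ≠ ⊤) :
    ∃ f : E →ₗ[ℝ] ℝ, f ≠ 0 ∧ ∀ x ∈ H, ∃ n : ℤ, f x = n := by
  set V := H.lineality
  obtain ⟨W, hVW⟩ := V.exists_isCompl
  have : Nontrivial W := by
    refine Submodule.nontrivial_iff_ne_bot.2 fun hW => hne ?_
    rw [hW] at hVW
    exact eq_top_iff.2 fun x _ => H.lineality_subset
      (Submodule.eq_top_iff'.1 (eq_top_of_isCompl_bot hVW) x)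
  let Λ : AddSubgroup W := H.comap W.subtype.toAddMonoidHom
  have hΛ : DiscreteTopology Λ := by
    refine discreteTopology_of_isClosed_of_lineality_eq_bot
      (hH.preimage continuous_subtype_val) ((Submodule.eq_bot_iff _).2 fun x hx => ?_)
    have hxV : (x : E) ∈ V := fun t => hx t
    simpa using Submodule.disjoint_def.1 hVW.disjoint x hxV x.2
  have : DiscreteTopology Λ.toIntSubmodule := hΛ
  obtain ⟨g, hg0, hg⟩ := Λ.toIntSubmodule.exists_dual_ne_zero_intValued_of_discreteTopology
  refine ⟨g ∘ₗ W.projectionOnto V hVW.symm, fun h => hg0 (LinearMap.ext fun w => ?_),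
    fun x hx => hg _ ?_⟩
  · simpa using LinearMap.congr_fun h w
  · show (W.projectionOnto V hVW.symm x : E) ∈ H
    rw [Submodule.coe_projectionOnto_apply, Submodule.projection_eq_self_sub_projection hVW]
    exact H.sub_mem hx (H.lineality_subset (Submodule.projection_apply_mem _ _))

theorem AddSubgroup.dense_closure_of_forall_intValued_dual_eq_zero [FiniteDimensional ℝ E]
    {s : Set E} (hs : ∀ f : E →ₗ[ℝ] ℝ, (∀ x ∈ s, ∃ n : ℤ, f x = n) → f = 0) :
    Dense (closure s : Set E) := by
  by_contra hdense
  have hne : (closure s).topologicalClosure ≠ ⊤ := fun h => hdense <| dense_iff_closure_eq.2 <| by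
    rw [← topologicalClosure_coe, h, coe_top]
  obtain ⟨f, hf0, hf⟩ :=
    exists_dual_ne_zero_intValued_of_isClosed (isClosed_topologicalClosure _) hne
  exact hf0 <| hs f fun x hx => hf x ((closure s).le_topologicalClosure (subset_closure hx))

theorem eq_zero_of_intValued_of_linearIndependent {m : ℕ} {v : Fin m → ℝ}
    (hli : LinearIndependent ℚ (Fin.cons (1 : ℝ) v : Fin (m + 1) → ℝ)) (f : (Fin m → ℝ) →ₗ[ℝ] ℝ)
    (hf : ∀ x ∈ insert v (range fun i => (Pi.single i 1 : Fin m → ℝ)), ∃ n : ℤ, f x = n) :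
    f = 0 := by
  obtain ⟨c, hc⟩ := hf v (mem_insert _ _)
  choose N hN using fun i => hf _ (mem_insert_of_mem _ ⟨i, rfl⟩)
  have hrepr : ∀ x : Fin m → ℝ, f x = ∑ i, x i * N i := fun x => by
    conv_lhs => rw [pi_eq_sum_univ' x]
    simp [hN]
  have hrel : ∑ j, (Fin.cons (-(c : ℚ)) (fun i => (N i : ℚ)) : Fin (m + 1) → ℚ) j •
      (Fin.cons (1 : ℝ) v : Fin (m + 1) → ℝ) j = 0 := by
    simp only [Fin.sum_univ_succ, Fin.cons_zero, Fin.cons_succ, Rat.smul_def]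
    push_cast
    rw [← hc, hrepr v]
    simp_rw [mul_comm (N _ : ℝ)]
    ring
  have hN0 : ∀ i, N i = 0 := fun i => by
    simpa using Fintype.linearIndependent_iff.1 hli _ hrel i.succ
  ext x
  simp [hrepr, hN0]

theorem denseRange_nsmul_of_linearIndependent {m : ℕ} {v : Fin m → ℝ}
    (hli : LinearIndependent ℚ (Fin.cons (1 : ℝ) v : Fin (m + 1) → ℝ)) :
    DenseRange (fun k : ℕ => k • fun i => (v i : UnitAddCircle)) := by
  let π : (Fin m → ℝ) →+ (Fin m → UnitAddCircle) :=
    (QuotientAddGroup.mk' (AddSubgroup.zmultiples (1 : ℝ))).compLeft (Fin m)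
  have hπ : IsOpenQuotientMap π :=
    IsOpenQuotientMap.piMap fun _ => QuotientAddGroup.isOpenQuotientMap_mk
  rw [← denseRange_zsmul_iff_nsmul, DenseRange, ← hπ.dense_preimage_iff]
  refine (AddSubgroup.dense_closure_of_forall_intValued_dual_eq_zero
    (eq_zero_of_intValued_of_linearIndependent hli)).mono ?_
  change _ ≤ (AddSubgroup.zmultiples (π v)).comap π
  rw [AddSubgroup.closure_le]
  rintro _ (rfl | ⟨i, rfl⟩)
  · exact AddSubgroup.mem_zmultiples _
  · have : π (Pi.single i 1) = 0 := by
      ext j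
      by_cases hj : j = i <;> simp [π, hj]
    simp [this]

-- The interval lies in `[0, 1)`, where `Int.fract` inverts the projection to the circle.
theorem abs_fract_sub_lt_of_coe_mem_image {a x ε : ℝ}
    (ha : (a : UnitAddCircle) ∈ ((↑) : ℝ → UnitAddCircle) '' Ioo (max 0 (x - ε)) (min 1 (x + ε))) :
    |Int.fract a - x| < ε := by
  obtain ⟨s, ⟨hs₁, hs₂⟩, hsa⟩ := ha
  rw [max_lt_iff] at hs₁
  rw [lt_min_iff] at hs₂
  rw [← AddCircle.coe_fract a] at hsa
  have hs : s = Int.fract a := (AddCircle.coe_eq_coe_iff_of_mem_Ico (a := 0)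
    ⟨hs₁.1.le, by simpa using hs₂.1⟩ ⟨Int.fract_nonneg a, by simpa using Int.fract_lt_one a⟩).1 hsa
  rw [← hs, abs_sub_lt_iff]
  constructor <;> linarith

theorem stmt_17 (m : ℕ) (v : Fin m → ℝ)
    (hli : LinearIndependent ℚ (Fin.cons (1 : ℝ) v : Fin (m + 1) → ℝ)) :
    ∀ x : Fin m → ℝ, (∀ i, x i ∈ Set.Icc (0 : ℝ) 1) → ∀ ε : ℝ, 0 < ε →
      ∃ k : ℕ, ∀ i, |Int.fract ((k : ℝ) * v i) - x i| ≤ ε := by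
  intro x hx ε hε
  let box := univ.pi fun i => ((↑) : ℝ → UnitAddCircle) '' Ioo (max 0 (x i - ε)) (min 1 (x i + ε))
  have hopen : IsOpen box :=
    isOpen_set_pi finite_univ fun i _ => QuotientAddGroup.isOpenMap_coe _ isOpen_Ioo
  have hne : box.Nonempty := univ_pi_nonempty_iff.2 fun i => (nonempty_Ioo.2 <| by
    simp only [max_lt_iff, lt_min_iff]
    refine ⟨⟨zero_lt_one, ?_⟩, ?_, ?_⟩ <;> linarith [(hx i).1, (hx i).2]).image _
  obtain ⟨k, hk⟩ := (denseRange_nsmul_of_linearIndependent hli).exists_mem_open hopen hne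
  refine ⟨k, fun i => (abs_fract_sub_lt_of_coe_mem_image ?_).le⟩
  simpa using hk i (mem_univ i)
end

section
/- Let β > 0 be irrational. Then lim_{T→∞} (1/T)·|{0 ≤ α ≤ T : {α} > (√β + √(1/β) − 1)/2}| equals (3 − √β − √(1/β))/2 if β ∈ ((7−3√5)/2, (7+3√5)/2), and 0 otherwise. -/
open MeasureTheory


-- floor of points in Ioo (k+c, k+1)
lemma floor_of_mem_Ioo {c : ℝ} (hc0 : 0 ≤ c) {k : ℕ} {α : ℝ}
    (hα : α ∈ Set.Ioo ((k : ℝ) + c) ((k : ℝ) + 1)) : ⌊α⌋ = (k : ℤ) := by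
  obtain ⟨h1, h2⟩ := hα
  rw [Int.floor_eq_iff]
  constructor
  · push_cast; linarith
  · push_cast; linarith

lemma fract_of_mem_Ioo {c : ℝ} (hc0 : 0 ≤ c) {k : ℕ} {α : ℝ}
    (hα : α ∈ Set.Ioo ((k : ℝ) + c) ((k : ℝ) + 1)) : c < Int.fract α := by
  have hf := floor_of_mem_Ioo hc0 hα
  have : Int.fract α = α - k := by rw [Int.fract, hf]; push_cast; ring
  rw [this]
  have := hα.1
  linarith

lemma aux_tendsto (c : ℝ) (hc0 : 0 ≤ c) (hc1 : c < 1) :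
    Filter.Tendsto
      (fun T : ℝ =>
        (volume {α : ℝ | α ∈ Set.Icc 0 T ∧ c < Int.fract α}).toReal / T)
      Filter.atTop (nhds (1 - c)) := by
  set S : ℝ → Set ℝ := fun T => {α : ℝ | α ∈ Set.Icc 0 T ∧ c < Int.fract α} with hS
  -- finiteness
  have hfin : ∀ T : ℝ, volume (S T) ≤ ENNReal.ofReal T := by
    intro T
    calc volume (S T) ≤ volume (Set.Icc (0:ℝ) T) := by
          apply measure_mono; intro x hx; exact hx.1
      _ = ENNReal.ofReal (T - 0) := Real.volume_Icc
      _ = ENNReal.ofReal T := by norm_num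
  -- lower bound
  have hlow : ∀ T : ℝ, 0 ≤ T → (⌊T⌋₊ : ℝ) * (1 - c) ≤ (volume (S T)).toReal := by
    intro T hT
    set n := ⌊T⌋₊ with hn
    have hsub : (⋃ k ∈ Finset.range n, Set.Ioo ((k : ℝ) + c) ((k : ℝ) + 1)) ⊆ S T := by
      intro α hα
      simp only [Set.mem_iUnion, Finset.mem_range] at hα
      obtain ⟨k, hk, hαk⟩ := hα
      refine ⟨⟨?_, ?_⟩, fract_of_mem_Ioo hc0 hαk⟩
      · have h1 := hαk.1
        have h2 : (0:ℝ) ≤ (k:ℝ) := Nat.cast_nonneg k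
        linarith
      · have h2 := hαk.2
        have : (k : ℝ) + 1 ≤ n := by exact_mod_cast hk
        have : (n : ℝ) ≤ T := Nat.floor_le hT
        linarith [hαk.2]
    have hdisj : (↑(Finset.range n) : Set ℕ).PairwiseDisjoint
        (fun k : ℕ => Set.Ioo ((k : ℝ) + c) ((k : ℝ) + 1)) := by
      intro i _ j _ hij
      apply Set.disjoint_left.2
      intro α hi hj
      have h1 := floor_of_mem_Ioo hc0 hi
      have h2 := floor_of_mem_Ioo hc0 hj
      exact hij (by exact_mod_cast h1.symm.trans h2)
    have hmeas : volume (⋃ k ∈ Finset.range n, Set.Ioo ((k : ℝ) + c) ((k : ℝ) + 1))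
        = n * ENNReal.ofReal (1 - c) := by
      rw [measure_biUnion_finset hdisj (fun k _ => measurableSet_Ioo)]
      have : ∀ k ∈ Finset.range n,
          volume (Set.Ioo ((k : ℝ) + c) ((k : ℝ) + 1)) = ENNReal.ofReal (1 - c) := by
        intro k _
        rw [Real.volume_Ioo]; ring_nf
      rw [Finset.sum_congr rfl this, Finset.sum_const, Finset.card_range, nsmul_eq_mul]
    have hle : (n : ENNReal) * ENNReal.ofReal (1 - c) ≤ volume (S T) := by
      rw [← hmeas]; exact measure_mono hsub
    have hne : volume (S T) ≠ ⊤ := ((hfin T).trans_lt ENNReal.ofReal_lt_top).ne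
    have := ENNReal.toReal_mono hne hle
    rw [ENNReal.toReal_mul, ENNReal.toReal_natCast, ENNReal.toReal_ofReal (by linarith)] at this
    exact this
  -- upper bound
  have hup : ∀ T : ℝ, 0 ≤ T → (volume (S T)).toReal ≤ ((⌊T⌋₊ : ℝ) + 1) * (1 - c) := by
    intro T hT
    set n := ⌊T⌋₊ with hn
    have hsub : S T ⊆ ⋃ k ∈ Finset.range (n+1), Set.Ioo ((k : ℝ) + c) ((k : ℝ) + 1) := by
      intro α hα
      obtain ⟨⟨h0, hT'⟩, hf⟩ := hα
      have hfl : (0:ℤ) ≤ ⌊α⌋ := Int.floor_nonneg.2 h0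
      set k := ⌊α⌋.toNat with hk
      have hkeq : (k : ℤ) = ⌊α⌋ := Int.toNat_of_nonneg hfl
      simp only [Set.mem_iUnion, Finset.mem_range]
      refine ⟨k, ?_, ?_, ?_⟩
      · have : (k : ℤ) ≤ (n : ℤ) := by
          rw [hkeq]
          have : ⌊α⌋ ≤ ⌊T⌋ := Int.floor_le_floor hT'
          have h2 : ⌊T⌋ = (n : ℤ) := (Int.natCast_floor_eq_floor hT).symm
          omega
        omega
      · have : Int.fract α = α - ⌊α⌋ := rfl
        have hkr : (k : ℝ) = (⌊α⌋ : ℝ) := by exact_mod_cast hkeq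
        rw [hkr]
        have := Int.fract_lt_one α
        linarith [hf, Int.self_sub_floor α]
      · have hkr : (k : ℝ) = (⌊α⌋ : ℝ) := by exact_mod_cast hkeq
        rw [hkr]
        exact Int.lt_floor_add_one α
    have hmle : volume (S T) ≤ (↑(n+1)) * ENNReal.ofReal (1 - c) := by
      calc volume (S T) ≤ volume (⋃ k ∈ Finset.range (n+1), Set.Ioo ((k : ℝ) + c) ((k : ℝ) + 1)) :=
            measure_mono hsub
        _ ≤ ∑ k ∈ Finset.range (n+1), volume (Set.Ioo ((k : ℝ) + c) ((k : ℝ) + 1)) :=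
            measure_biUnion_finset_le _ _
        _ = (↑(n+1)) * ENNReal.ofReal (1 - c) := by
            have : ∀ k ∈ Finset.range (n+1),
                volume (Set.Ioo ((k : ℝ) + c) ((k : ℝ) + 1)) = ENNReal.ofReal (1 - c) := by
              intro k _; rw [Real.volume_Ioo]; ring_nf
            rw [Finset.sum_congr rfl this, Finset.sum_const, Finset.card_range, nsmul_eq_mul]
    have hne : ((↑(n+1) : ENNReal) * ENNReal.ofReal (1 - c)) ≠ ⊤ := by
      exact ENNReal.mul_ne_top (ENNReal.natCast_ne_top _) ENNReal.ofReal_ne_top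
    have := ENNReal.toReal_mono hne hmle
    rw [ENNReal.toReal_mul, ENNReal.toReal_natCast, ENNReal.toReal_ofReal (by linarith)] at this
    push_cast at this
    exact this
  -- squeeze
  have hlim1 : Filter.Tendsto (fun T : ℝ => (⌊T⌋₊ : ℝ) * (1 - c) / T) Filter.atTop
      (nhds (1 - c)) := by
    have := (tendsto_nat_floor_div_atTop (R := ℝ)).mul_const (1 - c)
    simpa [div_mul_eq_mul_div, one_mul] using this
  have hlim2 : Filter.Tendsto (fun T : ℝ => ((⌊T⌋₊ : ℝ) + 1) * (1 - c) / T) Filter.atTop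
      (nhds (1 - c)) := by
    have h1 := (tendsto_nat_floor_div_atTop (R := ℝ)).add tendsto_inv_atTop_zero
    have h2 := h1.mul_const (1 - c)
    rw [add_zero, one_mul] at h2
    apply h2.congr'
    filter_upwards [Filter.eventually_gt_atTop (0:ℝ)] with T hT
    field_simp
  apply tendsto_of_tendsto_of_tendsto_of_le_of_le' hlim1 hlim2
  · filter_upwards [Filter.eventually_gt_atTop (0:ℝ)] with T hT
    gcongr
    exact hlow T hT.le
  · filter_upwards [Filter.eventually_gt_atTop (0:ℝ)] with T hT
    gcongr
    exact hup T hT.le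

theorem stmt_18 (β : ℝ) (hβ : 0 < β) (hirr : Irrational β) :
    Filter.Tendsto
      (fun T : ℝ =>
        (volume {α : ℝ | α ∈ Set.Icc 0 T ∧
          (Real.sqrt β + Real.sqrt (1 / β) - 1) / 2 < Int.fract α}).toReal / T)
      Filter.atTop
      (nhds (if β ∈ Set.Ioo ((7 - 3 * Real.sqrt 5) / 2) ((7 + 3 * Real.sqrt 5) / 2)
        then (3 - Real.sqrt β - Real.sqrt (1 / β)) / 2 else 0)) := by
  have hinv : Real.sqrt (1/β) = 1 / Real.sqrt β := by
    rw [one_div, Real.sqrt_inv, one_div]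
  simp only [hinv]
  set x := Real.sqrt β with hxdef
  have hx0 : 0 < x := Real.sqrt_pos.2 hβ
  have hx2 : x ^ 2 = β := Real.sq_sqrt hβ.le
  have hxinv : x * (1/x) = 1 := mul_one_div_cancel hx0.ne'
  have h5 : Real.sqrt 5 ^ 2 = 5 := Real.sq_sqrt (by norm_num)
  have h5p : (0:ℝ) ≤ Real.sqrt 5 := Real.sqrt_nonneg 5
  have hs2 : 2 ≤ x + 1/x := by nlinarith [sq_nonneg (x - 1)]
  have hiff : β ∈ Set.Ioo ((7 - 3 * Real.sqrt 5) / 2) ((7 + 3 * Real.sqrt 5) / 2)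
      ↔ x + 1/x < 3 := by
    constructor
    · rintro ⟨h1, h2⟩
      rw [← hx2] at h1 h2
      have hq : x^2 - 3*x + 1 < 0 := by
        by_contra hq
        push_neg at hq
        have hpos : (0:ℝ) < x^2 + 3*x + 1 := by positivity
        nlinarith [mul_nonneg hq hpos.le, mul_pos (sub_pos.2 h2) (sub_pos.2 h1)]
      nlinarith [hq, hxinv, hx0]
    · intro hs3
      have hq : x^2 - 3*x + 1 < 0 := by nlinarith [hxinv, hx0]
      have h5lt : Real.sqrt 5 < 3 := by nlinarith [h5p]
      have hl : (3 - Real.sqrt 5)/2 < x := by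
        by_contra h
        push_neg at h
        have ht : Real.sqrt 5 ≤ 3 - 2*x := by linarith
        nlinarith [mul_nonneg (sub_nonneg.2 ht) (by linarith : (0:ℝ) ≤ 3 - 2*x + Real.sqrt 5)]
      have hr : x < (3 + Real.sqrt 5)/2 := by
        by_contra h
        push_neg at h
        have ht : Real.sqrt 5 ≤ 2*x - 3 := by linarith
        nlinarith [mul_nonneg (sub_nonneg.2 ht) (by linarith : (0:ℝ) ≤ 2*x - 3 + Real.sqrt 5)]
      rw [← hx2]
      constructor
      · nlinarith [mul_pos (sub_pos.2 hl) (by linarith : (0:ℝ) < x + (3 - Real.sqrt 5)/2)]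
      · nlinarith [mul_pos (sub_pos.2 hr) (by linarith : (0:ℝ) < (3 + Real.sqrt 5)/2 + x)]
  by_cases hmem : β ∈ Set.Ioo ((7 - 3 * Real.sqrt 5) / 2) ((7 + 3 * Real.sqrt 5) / 2)
  · rw [if_pos hmem]
    have hs3 : x + 1/x < 3 := hiff.1 hmem
    have heq : (3 - x - 1/x)/2 = 1 - (x + 1/x - 1)/2 := by ring
    rw [heq]
    exact aux_tendsto _ (by linarith) (by linarith)
  · rw [if_neg hmem]
    have hs3 : 3 ≤ x + 1/x := not_lt.1 fun h => hmem (hiff.2 h)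
    have hempty : ∀ T : ℝ,
        {α : ℝ | α ∈ Set.Icc 0 T ∧ (x + 1/x - 1)/2 < Int.fract α} = ∅ := by
      intro T
      ext α
      simp only [Set.mem_setOf_eq, Set.mem_empty_iff_false, iff_false, not_and, not_lt]
      intro _
      linarith [Int.fract_lt_one α]
    simp only [hempty, measure_empty, ENNReal.toReal_zero, zero_div]
    exact tendsto_const_nhds
end
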